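/- arXiv:math/0112213 — 9 statements merged into one kernel-verified Lean document; each statement's English description precedes it below -/
import Mathlib

section
/- Let X be a set with at least two elements and let 𝓕 be a clone on X. Let r ≥ 4 be an integer and assume that every (r−1)-ary member of 𝓕 is a projection. Then for every r-ary f ∈ 𝓕 there exists ℓ ∈ {1, …, r} such that f(x̄) = x_ℓ for every tuple x̄ ∈ Xʳ that has a repeated entry. -/
/-- `F` is a clone on `X`: it contains all projections and is closed
under composition. -/
def IsClone {X : Type*} (F : ∀ n : ℕ, Set ((Fin n → X) → X)) : Prop :=
  (∀ n : ℕ, ∀ i : Fin n, (fun x : Fin n → X => x i) ∈ F n) ∧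
  (∀ n m : ℕ, 0 < n → 0 < m → ∀ f ∈ F n, ∀ g : Fin n → (Fin m → X) → X,
    (∀ i, g i ∈ F m) → (fun x : Fin m → X => f fun i => g i x) ∈ F m)

/-- `f` is a projection (monarchy). -/
def IsProj {X : Type*} (n : ℕ) (f : (Fin n → X) → X) : Prop :=
  ∃ t : Fin n, ∀ x : Fin n → X, f x = x t

/-- There is a fourth element in `Fin r` when `4 ≤ r`. -/
lemma exists_fourth {r : ℕ} (hr : 4 ≤ r) (a b c : Fin r) :
    ∃ w : Fin r, w ≠ a ∧ w ≠ b ∧ w ≠ c := by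
  by_contra h
  push_neg at h
  have hsub : (Finset.univ : Finset (Fin r)) ⊆ {a, b, c} := by
    intro w _
    simp only [Finset.mem_insert, Finset.mem_singleton]
    rcases eq_or_ne w a with h1 | h1
    · exact Or.inl h1
    rcases eq_or_ne w b with h2 | h2
    · exact Or.inr (Or.inl h2)
    exact Or.inr (Or.inr (h w h1 h2))
  have h1 := Finset.card_le_card hsub
  have h2 : ({a, b, c} : Finset (Fin r)).card ≤ 3 := by
    refine (Finset.card_insert_le _ _).trans (Nat.succ_le_succ ?_)
    refine (Finset.card_insert_le _ _).trans (Nat.succ_le_succ ?_)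
    simp
  simp only [Finset.card_univ, Fintype.card_fin] at h1
  omega

/-- The hard overlapping case: `f` agrees with `x ℓ` on `x b = x s` and with
`x b` on `x s = x ℓ`, where `b, s, ℓ` are pairwise distinct; this is impossible. -/
lemma hardcase {X : Type*} {u v : X} (huv : u ≠ v) {r : ℕ} (hr : 4 ≤ r)
    (f : (Fin r → X) → X) (b s ℓ : Fin r)
    (hbs : b ≠ s) (hℓb : ℓ ≠ b) (hℓs : ℓ ≠ s)
    (H1 : ∀ x : Fin r → X, x b = x s → f x = x ℓ)
    (H2 : ∀ x : Fin r → X, x s = x ℓ → f x = x b)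
    (hA : ∀ i j : Fin r, i ≠ j → ∃ c, ∀ x : Fin r → X, x i = x j → f x = x c) :
    False := by
  obtain ⟨w, hwb, hws, hwℓ⟩ := exists_fourth hr b s ℓ
  obtain ⟨c, hc⟩ := hA ℓ w (Ne.symm hwℓ)
  -- first test function: indicator of {ℓ, w}
  set x1 : Fin r → X := fun t => if t = ℓ ∨ t = w then u else v with hx1
  have hx1b : x1 b = v := by
    simp only [hx1]
    rw [if_neg]
    rintro (h | h)
    · exact hℓb h.symm
    · exact hwb h.symm
  have hx1s : x1 s = v := by
    simp only [hx1]
    rw [if_neg]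
    rintro (h | h)
    · exact hℓs h.symm
    · exact hws h.symm
  have hx1ℓ : x1 ℓ = u := by simp [hx1]
  have hx1w : x1 w = u := by simp [hx1]
  have e1 : f x1 = u := by rw [H1 x1 (by rw [hx1b, hx1s]), hx1ℓ]
  have e2 : f x1 = x1 c := hc x1 (by rw [hx1ℓ, hx1w])
  have hcmem : c = ℓ ∨ c = w := by
    by_contra h
    push_neg at h
    have : x1 c = v := by
      simp only [hx1]
      rw [if_neg]
      rintro (hh | hh)
      · exact h.1 hh
      · exact h.2 hh
    rw [e1, this] at e2
    exact huv e2
  -- second test function: indicator of {b}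
  set x2 : Fin r → X := fun t => if t = b then u else v with hx2
  have hx2s : x2 s = v := by simp [hx2, Ne.symm hbs]
  have hx2ℓ : x2 ℓ = v := by simp [hx2, hℓb]
  have hx2w : x2 w = v := by simp [hx2, hwb]
  have hx2b : x2 b = u := by simp [hx2]
  have e3 : f x2 = u := by rw [H2 x2 (by rw [hx2s, hx2ℓ]), hx2b]
  have e4 : f x2 = x2 c := hc x2 (by rw [hx2ℓ, hx2w])
  rcases hcmem with rfl | rfl
  · rw [e3, hx2ℓ] at e4; exact huv e4
  · rw [e3, hx2w] at e4; exact huv e4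

/-- Case (b): pairs `{b, s'}` and `{ℓ, s₂}` with `f` projecting to `ℓ` on the
first diagonal and to `b` on the second, with the stated distinctness; impossible. -/
lemma case_b {X : Type*} {u v : X} (huv : u ≠ v) {r : ℕ} (hr : 4 ≤ r)
    (f : (Fin r → X) → X) (b s' ℓ s₂ : Fin r)
    (hbs' : b ≠ s') (hℓb : ℓ ≠ b) (hℓs' : ℓ ≠ s') (hℓs₂ : ℓ ≠ s₂) (hbs₂ : b ≠ s₂)
    (H1 : ∀ x : Fin r → X, x b = x s' → f x = x ℓ)
    (H2 : ∀ x : Fin r → X, x ℓ = x s₂ → f x = x b)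
    (hA : ∀ i j : Fin r, i ≠ j → ∃ c, ∀ x : Fin r → X, x i = x j → f x = x c) :
    False := by
  by_cases hs : s' = s₂
  · subst hs
    exact hardcase huv hr f b s' ℓ hbs' hℓb hℓs'
      H1 (fun x hx => H2 x hx.symm) hA
  · -- disjoint pairs: direct contradiction
    set x : Fin r → X := fun t => if t = b ∨ t = s' then u else v with hxdef
    have hxb : x b = u := by simp [hxdef]
    have hxs' : x s' = u := by simp [hxdef]
    have hxℓ : x ℓ = v := by
      simp only [hxdef]
      rw [if_neg]
      rintro (h | h)
      · exact hℓb h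
      · exact hℓs' h
    have hxs₂ : x s₂ = v := by
      simp only [hxdef]
      rw [if_neg]
      rintro (h | h)
      · exact hbs₂ h.symm
      · exact hs h.symm
    have e1 : f x = v := by rw [H1 x (by rw [hxb, hxs']), hxℓ]
    have e2 : f x = u := by rw [H2 x (by rw [hxℓ, hxs₂]), hxb]
    exact huv (e2.symm.trans e1)

/-- The consistency lemma: if for every pair of coordinates `f` agrees with
some projection on the corresponding diagonal, then there is a single
projection working for all diagonals. -/
lemma consist {X : Type*} {u v : X} (huv : u ≠ v) {r : ℕ} (hr : 4 ≤ r)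
    (f : (Fin r → X) → X)
    (hA : ∀ i j : Fin r, i ≠ j → ∃ c, ∀ x : Fin r → X, x i = x j → f x = x c) :
    ∃ ℓ : Fin r, ∀ i j : Fin r, i ≠ j → ∀ x : Fin r → X, x i = x j → f x = x ℓ := by
  by_cases hcase : ∃ i j ℓ : Fin r, i ≠ j ∧ ℓ ≠ i ∧ ℓ ≠ j ∧
      ∀ x : Fin r → X, x i = x j → f x = x ℓ
  · obtain ⟨i, j, ℓ, hij, hℓi, hℓj, hP⟩ := hcase
    refine ⟨ℓ, ?_⟩
    intro k m hkm
    obtain ⟨b, hb⟩ := hA k m hkm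
    by_cases hℓkm : ℓ = k ∨ ℓ = m
    · -- ℓ ∈ {k, m}
      by_cases hbkm : b = k ∨ b = m
      · intro x hx
        have hxb : x b = x ℓ := by
          rcases hbkm with rfl | rfl <;> rcases hℓkm with h | h <;>
            rw [h] <;> first | rfl | exact hx | exact hx.symm
        rw [hb x hx, hxb]
      · push_neg at hbkm
        obtain ⟨hbk, hbm⟩ := hbkm
        exfalso
        by_cases hbij : b = i ∨ b = j
        · -- reorder pairs and apply case_b
          -- pair {i,j} = {b, s'}, pair {k,m} = {ℓ, s₂}
          rcases hbij with rfl | rfl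
          · -- b = i, s' = j
            rcases hℓkm with rfl | rfl
            · -- ℓ = k, s₂ = m
              exact case_b huv hr f b j ℓ m hij hℓi hℓj hkm hbm hP hb hA
            · -- ℓ = m, s₂ = k
              exact case_b huv hr f b j ℓ k hij hℓi hℓj (Ne.symm hkm) hbk hP
                (fun x hx => hb x hx.symm) hA
          · -- b = j, s' = i
            rcases hℓkm with rfl | rfl
            · exact case_b huv hr f b i ℓ m (Ne.symm hij) hℓj hℓi hkm hbm
                (fun x hx => hP x hx.symm) hb hA
            · exact case_b huv hr f b i ℓ k (Ne.symm hij) hℓj hℓi (Ne.symm hkm) hbk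
                (fun x hx => hP x hx.symm) (fun x hx => hb x hx.symm) hA
        · push_neg at hbij
          obtain ⟨hbi, hbj⟩ := hbij
          -- b outside both pairs: direct contradiction
          set x : Fin r → X := fun t => if t = b then u else v with hxdef
          have hxb : x b = u := by simp [hxdef]
          have hxv : ∀ t, t ≠ b → x t = v := fun t ht => by simp [hxdef, ht]
          have hℓb : ℓ ≠ b := by
            rcases hℓkm with rfl | rfl
            · exact Ne.symm hbk
            · exact Ne.symm hbm
          have e1 : f x = v := by
            rw [hP x (by rw [hxv i (Ne.symm hbi), hxv j (Ne.symm hbj)]), hxv ℓ hℓb]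
          have e2 : f x = u := by
            rw [hb x (by rw [hxv k (Ne.symm hbk), hxv m (Ne.symm hbm)]), hxb]
          rw [e1] at e2
          exact huv e2.symm
    · push_neg at hℓkm
      obtain ⟨hℓk, hℓm⟩ := hℓkm
      have hbℓ : b = ℓ := by
        by_contra hne
        set x : Fin r → X := fun t => if t = ℓ then u else v with hxdef
        have hxℓ : x ℓ = u := by simp [hxdef]
        have hxv : ∀ t, t ≠ ℓ → x t = v := fun t ht => by simp [hxdef, ht]
        have e1 : f x = u := by
          rw [hP x (by rw [hxv i (Ne.symm hℓi), hxv j (Ne.symm hℓj)]), hxℓ]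
        have e2 : f x = v := by
          rw [hb x (by rw [hxv k (Ne.symm hℓk), hxv m (Ne.symm hℓm)]), hxv b hne]
        rw [e1] at e2
        exact huv e2
      subst hbℓ
      exact hb
  · -- every diagonal projection index lies in its own pair: impossible
    exfalso
    have hmem : ∀ i j a : Fin r, i ≠ j → (∀ x : Fin r → X, x i = x j → f x = x a) →
        a = i ∨ a = j := by
      intro i j a hij hPa
      by_contra h
      push_neg at h
      exact hcase ⟨i, j, a, hij, h.1, h.2, hPa⟩
    have h0 : (0 : ℕ) < r := by omega
    let i0 : Fin r := ⟨0, by omega⟩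
    let i1 : Fin r := ⟨1, by omega⟩
    let i2 : Fin r := ⟨2, by omega⟩
    let i3 : Fin r := ⟨3, by omega⟩
    obtain ⟨a, ha⟩ := hA i0 i1 (Fin.ne_of_val_ne (by norm_num))
    obtain ⟨b, hb⟩ := hA i2 i3 (Fin.ne_of_val_ne (by norm_num))
    have hamem := hmem i0 i1 a (Fin.ne_of_val_ne (by norm_num)) ha
    have hbmem := hmem i2 i3 b (Fin.ne_of_val_ne (by norm_num)) hb
    set x : Fin r → X := fun t => if t = i2 ∨ t = i3 then v else u with hxdef
    have hx0 : x i0 = u := by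
      simp only [hxdef]
      rw [if_neg]
      rintro (h | h) <;> exact absurd (congrArg Fin.val h) (by norm_num [i0, i2, i3])
    have hx1 : x i1 = u := by
      simp only [hxdef]
      rw [if_neg]
      rintro (h | h) <;> exact absurd (congrArg Fin.val h) (by norm_num [i1, i2, i3])
    have hx2 : x i2 = v := by simp [hxdef]
    have hx3 : x i3 = v := by simp [hxdef]
    have e1 : f x = u := by
      rw [ha x (by rw [hx0, hx1])]
      rcases hamem with rfl | rfl
      · exact hx0
      · exact hx1
    have e2 : f x = v := by
      rw [hb x (by rw [hx2, hx3])]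
      rcases hbmem with rfl | rfl
      · exact hx2
      · exact hx3
    rw [e1] at e2
    exact huv e2

theorem stmt2 {X : Type*} [Nontrivial X] (F : ∀ n : ℕ, Set ((Fin n → X) → X))
    (hF : IsClone F) (r : ℕ) (hr : 4 ≤ r)
    (hproj : ∀ f ∈ F (r - 1), IsProj (r - 1) f) :
    ∀ f ∈ F r, ∃ ℓ : Fin r, ∀ x : Fin r → X,
      ¬ Function.Injective x → f x = x ℓ := by
  obtain ⟨n, rfl⟩ : ∃ n, r = n + 1 := ⟨r - 1, by omega⟩
  obtain ⟨u, v, huv⟩ := exists_pair_ne X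
  intro f hf
  -- every identification of two coordinates yields a projection
  have hA : ∀ i j : Fin (n + 1), i ≠ j →
      ∃ c : Fin (n + 1), ∀ x : Fin (n + 1) → X, x i = x j → f x = x c := by
    intro i j hij
    have hd : ∀ k : Fin (n + 1), ∃ m : Fin n,
        (k ≠ j → j.succAbove m = k) ∧ (k = j → j.succAbove m = i) := by
      intro k
      by_cases hk : k = j
      · obtain ⟨m, hm⟩ := Fin.exists_succAbove_eq hij
        exact ⟨m, fun h => absurd hk h, fun _ => hm⟩
      · obtain ⟨m, hm⟩ := Fin.exists_succAbove_eq hk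
        exact ⟨m, fun _ => hm, fun h => absurd h hk⟩
    choose d hd1 hd2 using hd
    have hn : 0 < n := by omega
    have hg : (fun y : Fin n → X => f (fun k => y (d k))) ∈ F n :=
      hF.2 (n + 1) n (by omega) hn f hf (fun k => fun y : Fin n → X => y (d k))
        (fun k => hF.1 n (d k))
    obtain ⟨t, ht⟩ := hproj _ hg
    refine ⟨j.succAbove t, ?_⟩
    intro x hx
    have hxe : (fun k => (x ∘ j.succAbove) (d k)) = x := by
      funext k
      by_cases hk : k = j
      · subst hk
        simp only [Function.comp_apply, hd2 k rfl]
        rw [hx]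
      · simp only [Function.comp_apply, hd1 k hk]
    have h := ht (x ∘ j.succAbove)
    simp only [hxe] at h
    exact h
  obtain ⟨ℓ, hℓ⟩ := consist huv (by omega) f hA
  refine ⟨ℓ, ?_⟩
  intro x hx
  rw [Function.Injective] at hx
  push_neg at hx
  obtain ⟨a, b, hab, hne⟩ := hx
  exact hℓ a b hne x hab
end

section
/- Let X be a set, 𝓕 a clone on X, and r ≥ 3 an integer such that f_{r;1,2} ∈ 𝓕. Then f_{r+1;1,2} ∈ 𝓕. -/
set_option maxHeartbeats 1000000

/-- The function `f_{r;1,2} : Xʳ → X`: it returns the second coordinate on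
injective tuples, and the first coordinate on tuples with a repeated entry. -/
noncomputable def fFun {X : Type*} (r : ℕ) [NeZero r] (x : Fin r → X) : X :=
  haveI := Classical.propDecidable (Function.Injective x)
  if Function.Injective x then x 1 else x 0

def Bmap (r : ℕ) : Fin r → Fin (r + 1) :=
  fun k => ⟨if k.val < 2 then k.val else k.val + 1, by split <;> omega⟩

lemma Bmap_inj (r : ℕ) : Function.Injective (Bmap r) := by
  intro a b hab
  simp only [Bmap, Fin.mk.injEq] at hab
  ext
  split_ifs at hab <;> omega

def Smap (r : ℕ) (j : Fin r) : Fin r → Fin (r + 1) :=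
  fun k => Equiv.swap (1 : Fin (r + 1)) j.castSucc (Bmap r k)

lemma Smap_inj (r : ℕ) (j : Fin r) : Function.Injective (Smap r j) :=
  (Equiv.swap _ _).injective.comp (Bmap_inj r)

lemma val_one_fin (r : ℕ) (hr : 3 ≤ r) : ((1 : Fin (r + 1)) : ℕ) = 1 := by
  rw [Fin.val_one']
  exact Nat.mod_eq_of_lt (by omega)

lemma val_one_fin' (r : ℕ) [NeZero r] (hr : 3 ≤ r) : ((1 : Fin r) : ℕ) = 1 := by
  rw [Fin.val_one']
  exact Nat.mod_eq_of_lt (by omega)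

lemma Smap_zero (r : ℕ) (hr : 3 ≤ r) (j : Fin r) (hj : j.val ≠ 0) :
    Smap r j ⟨0, by omega⟩ = 0 := by
  have hB : Bmap r ⟨0, by omega⟩ = ⟨0, by omega⟩ := by simp [Bmap]
  unfold Smap
  rw [hB]
  rw [Equiv.swap_apply_of_ne_of_ne]
  · rfl
  · intro hc
    have := congrArg Fin.val hc
    rw [val_one_fin r hr] at this
    simp at this
  · intro hc
    have := congrArg Fin.val hc
    simp only [Fin.coe_castSucc] at this
    exact hj (by omega)

lemma Smap_one (r : ℕ) (hr : 3 ≤ r) (j : Fin r) :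
    Smap r j ⟨1, by omega⟩ = j.castSucc := by
  have hB : Bmap r ⟨1, by omega⟩ = (1 : Fin (r + 1)) := by
    ext
    rw [val_one_fin r hr]
    simp [Bmap]
  unfold Smap
  rw [hB, Equiv.swap_apply_left]

lemma Smap_last (r : ℕ) (hr : 3 ≤ r) (j : Fin r) :
    Smap r j ⟨r - 1, by omega⟩ = Fin.last r := by
  have hB : Bmap r ⟨r - 1, by omega⟩ = Fin.last r := by
    ext
    simp only [Bmap, Fin.val_last]
    split <;> omega
  unfold Smap
  rw [hB]
  rw [Equiv.swap_apply_of_ne_of_ne]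
  · intro hc
    have := congrArg Fin.val hc
    rw [val_one_fin r hr, Fin.val_last] at this
    omega
  · intro hc
    have := congrArg Fin.val hc
    rw [Fin.coe_castSucc, Fin.val_last] at this
    have := j.isLt
    omega

/-- The auxiliary `r+1`-ary functions. -/
noncomputable def uFun {X : Type*} (r : ℕ) [NeZero r] (j : Fin r) :
    (Fin (r + 1) → X) → X :=
  if j.val = 0 then (fun x => x 0)
  else (fun x => fFun r (fun i => x (Smap r j i)))

lemma uFun_zero {X : Type*} (r : ℕ) [NeZero r] (x : Fin (r + 1) → X) :
    uFun r 0 x = x 0 := by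
  simp [uFun]

lemma uFun_inj {X : Type*} (r : ℕ) [NeZero r] (hr : 3 ≤ r) (j : Fin r) (hj : j.val ≠ 0)
    (x : Fin (r + 1) → X) (hinj : Function.Injective (fun i => x (Smap r j i))) :
    uFun r j x = x j.castSucc := by
  simp only [uFun, hj, if_false]
  unfold fFun
  rw [if_pos hinj]
  show x (Smap r j 1) = x j.castSucc
  have h1r : (1 : Fin r) = ⟨1, by omega⟩ := by ext; rw [val_one_fin' r hr]
  rw [h1r, Smap_one r hr j]

lemma uFun_ninj {X : Type*} (r : ℕ) [NeZero r] (hr : 3 ≤ r) (j : Fin r) (hj : j.val ≠ 0)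
    (x : Fin (r + 1) → X) (hni : ¬ Function.Injective (fun i => x (Smap r j i))) :
    uFun r j x = x 0 := by
  simp only [uFun, hj, if_false]
  unfold fFun
  rw [if_neg hni]
  show x (Smap r j 0) = x 0
  have h0r : (0 : Fin r) = ⟨0, by omega⟩ := rfl
  rw [h0r, Smap_zero r hr j hj]

lemma uFun_val {X : Type*} (r : ℕ) [NeZero r] (hr : 3 ≤ r)
    (x : Fin (r + 1) → X)
    (hall : ∀ j : Fin r, j.val ≠ 0 → Function.Injective (fun i => x (Smap r j i)))
    (j : Fin r) : uFun r j x = x j.castSucc := by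
  by_cases hj : j.val = 0
  · have hj0 : j = 0 := by ext; simpa using hj
    subst hj0
    have h0 : (0 : Fin r).castSucc = (0 : Fin (r + 1)) := by ext; simp
    rw [h0, uFun_zero]
  · exact uFun_inj r hr j hj x (hall j hj)

lemma key_lemma {X : Type*} (r : ℕ) [NeZero r] (hr : 3 ≤ r) (x : Fin (r + 1) → X)
    (hall : ∀ j : Fin r, j.val ≠ 0 → Function.Injective (fun i => x (Smap r j i)))
    (a b : Fin (r + 1)) (hab : x a = x b) (hne : a ≠ b) (ha : a.val < r)
    (hb : b.val = r) : False := by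
  by_cases ha0 : a.val = 0
  · have hinj := hall ⟨1, by omega⟩ (by simp)
    have h0 : Smap r ⟨1, by omega⟩ ⟨0, by omega⟩ = a := by
      rw [Smap_zero r hr ⟨1, by omega⟩ (by simp)]
      ext; simp [ha0]
    have hl : Smap r ⟨1, by omega⟩ ⟨r - 1, by omega⟩ = b := by
      rw [Smap_last r hr]
      ext; rw [Fin.val_last, hb]
    have heq2 : (fun i => x (Smap r ⟨1, by omega⟩ i)) ⟨0, by omega⟩
        = (fun i => x (Smap r ⟨1, by omega⟩ i)) ⟨r - 1, by omega⟩ := by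
      show x (Smap r ⟨1, by omega⟩ ⟨0, by omega⟩)
        = x (Smap r ⟨1, by omega⟩ ⟨r - 1, by omega⟩)
      rw [h0, hl]; exact hab
    have := hinj heq2
    simp only [Fin.mk.injEq] at this
    omega
  · have hinj := hall ⟨a.val, ha⟩ (by simpa using ha0)
    have h1 : Smap r ⟨a.val, ha⟩ ⟨1, by omega⟩ = a := by
      rw [Smap_one r hr]
      ext; simp
    have hl : Smap r ⟨a.val, ha⟩ ⟨r - 1, by omega⟩ = b := by
      rw [Smap_last r hr]
      ext; rw [Fin.val_last, hb]
    have heq2 : (fun i => x (Smap r ⟨a.val, ha⟩ i)) ⟨1, by omega⟩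
        = (fun i => x (Smap r ⟨a.val, ha⟩ i)) ⟨r - 1, by omega⟩ := by
      show x (Smap r ⟨a.val, ha⟩ ⟨1, by omega⟩)
        = x (Smap r ⟨a.val, ha⟩ ⟨r - 1, by omega⟩)
      rw [h1, hl]; exact hab
    have := hinj heq2
    simp only [Fin.mk.injEq] at this
    omega

lemma uFun_not_inj {X : Type*} (r : ℕ) [NeZero r] (hr : 3 ≤ r) (x : Fin (r + 1) → X)
    (hx : ¬ Function.Injective x) :
    ¬ Function.Injective (fun j : Fin r => uFun r j x) := by
  by_cases hall : ∀ j : Fin r, j.val ≠ 0 →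
      Function.Injective (fun i => x (Smap r j i))
  · rw [Function.not_injective_iff] at hx
    obtain ⟨a, b, hab, hne⟩ := hx
    have ha' : a.val < r := by
      by_contra hc
      have har : a.val = r := by have := a.isLt; omega
      have hbr : b.val < r := by
        rcases Nat.lt_or_ge b.val r with h' | h'
        · exact h'
        · exfalso; apply hne; ext; have := b.isLt; omega
      exact key_lemma r hr x hall b a hab.symm (Ne.symm hne) hbr har
    rcases Nat.lt_or_ge b.val r with hb' | hb'
    · intro hcon
      apply hne
      have huab : uFun r ⟨a.val, ha'⟩ x = uFun r ⟨b.val, hb'⟩ x := by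
        rw [uFun_val r hr x hall, uFun_val r hr x hall]
        have e1 : (⟨a.val, ha'⟩ : Fin r).castSucc = a := by ext; simp
        have e2 : (⟨b.val, hb'⟩ : Fin r).castSucc = b := by ext; simp
        rw [e1, e2]; exact hab
      have := hcon huab
      simp only [Fin.mk.injEq] at this
      ext; exact this
    · have hbr : b.val = r := by have := b.isLt; omega
      exact absurd (key_lemma r hr x hall a b hab hne ha' hbr) not_false
  · push_neg at hall
    obtain ⟨j, hj, hjni⟩ := hall
    intro hcon
    have hjx : uFun r j x = uFun r 0 x := by
      rw [uFun_ninj r hr j hj x hjni, uFun_zero]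
    have := hcon hjx
    exact hj (by simpa using congrArg Fin.val this)

lemma main_eq {X : Type*} (r : ℕ) [NeZero r] (hr : 3 ≤ r) :
    (fun x : Fin (r + 1) → X => fFun r (fun j => uFun r j x))
      = fFun (r + 1) := by
  funext x
  by_cases hx : Function.Injective x
  · have hall : ∀ j : Fin r, j.val ≠ 0 →
        Function.Injective (fun i => x (Smap r j i)) :=
      fun j _ => hx.comp (Smap_inj r j)
    have huval := uFun_val r hr x hall
    have hvinj : Function.Injective (fun j : Fin r => uFun r j x) := by
      intro a b hab
      simp only [huval] at hab
      exact Fin.castSucc_injective r (hx hab)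
    conv_lhs => rw [fFun]
    rw [if_pos hvinj]
    conv_rhs => rw [fFun]
    rw [if_pos hx]
    show uFun r 1 x = x 1
    rw [huval 1]
    congr 1
    ext
    rw [Fin.coe_castSucc, val_one_fin' r hr, val_one_fin r hr]
  · have hvni := uFun_not_inj r hr x hx
    conv_lhs => rw [fFun]
    rw [if_neg hvni]
    conv_rhs => rw [fFun]
    rw [if_neg hx]
    exact uFun_zero r x

theorem stmt3 {X : Type*} (F : ∀ n : ℕ, Set ((Fin n → X) → X)) (hF : IsClone F)
    (r : ℕ) (hr : 3 ≤ r)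
    (h : @fFun X r ⟨by omega⟩ ∈ F r) :
    @fFun X (r + 1) ⟨by omega⟩ ∈ F (r + 1) := by
  haveI : NeZero r := ⟨by omega⟩
  obtain ⟨hproj, hcomp⟩ := hF
  have hmem : ∀ j : Fin r, uFun (X := X) r j ∈ F (r + 1) := by
    intro j
    by_cases hj : j.val = 0
    · simpa [uFun, hj] using hproj (r + 1) 0
    · simp only [uFun, hj, if_false]
      exact hcomp r (r + 1) (by omega) (by omega) _ h _
        (fun i => hproj (r + 1) (Smap r j i))
  have hmain : (fun x : Fin (r + 1) → X => fFun r (fun j => uFun r j x)) ∈ F (r + 1) :=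
    hcomp r (r + 1) (by omega) (by omega) _ h (uFun r) hmem
  rw [main_eq r hr] at hmain
  exact hmain
end

section
/- Let X be a finite set with at least 3 elements and let 𝓕 be a symmetric clone on X such that every binary member of 𝓕 is a projection and some ternary member of 𝓕 is not a projection. Let f* ∈ 𝓕 be a ternary function that is not a projection, and let ā = (a₁, a₂, a₃) ∈ X³ be injective and such that f*(ā′) = a′₁ for every permutation ā′ = (a′₁, a′₂, a′₃) of ā, while it is not the case that f*(b̄) = b₁ for every b̄ ∈ X³ with a repeated entry. Then there is a ternary g ∈ 𝓕 such that either (a) g(b̄) = b₁ for every b̄ ∈ X³ with a repeated entry and g(ā′) = a′₂ for every permutation ā′ of ā, or (b) g(b̄) = g_{3;1,2}(b̄) for every b̄ ∈ X³ with a repeated entry and g(ā′) = a′₁ for every permutation ā′ of ā. -/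
/-- The clone `F` is symmetric. -/
def SymClone {X : Type*} (F : ∀ n : ℕ, Set ((Fin n → X) → X)) : Prop :=
  ∀ π : Equiv.Perm X, ∀ n : ℕ, ∀ f ∈ F n,
    (fun x : Fin n → X => π.symm (f fun i => π (x i))) ∈ F n

/-- The function `g_{3;1,2} : X³ → X`: `g(x₁,x₂,x₃) = x₂` if `x₂ = x₃`,
and `x₁` otherwise. -/
noncomputable def g3 {X : Type*} (x : Fin 3 → X) : X :=
  haveI := Classical.propDecidable (x 1 = x 2)
  if x 1 = x 2 then x 1 else x 0

section AuxStmt6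
variable {X : Type*}

private lemma noninj_cases3 {b : Fin 3 → X} (h : ¬ Function.Injective b) :
    b 1 = b 2 ∨ b 0 = b 2 ∨ b 0 = b 1 := by
  by_contra hc
  push_neg at hc
  obtain ⟨h12, h02, h01⟩ := hc
  apply h
  intro i j hij
  fin_cases i <;> fin_cases j <;> simp_all

private lemma eqA3 {b : Fin 3 → X} (h : b 1 = b 2) : b = ![b 0, b 1, b 1] := by
  funext i; fin_cases i <;> simp [← h]

private lemma eqB3 {b : Fin 3 → X} (h : b 0 = b 2) : b = ![b 0, b 1, b 0] := by
  funext i; fin_cases i <;> simp [← h]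

private lemma eqC3 {b : Fin 3 → X} (h : b 0 = b 1) : b = ![b 0, b 0, b 2] := by
  funext i; fin_cases i <;> simp [← h]

private lemma tup0 (x y : X) : (fun i : Fin 3 => if i = 0 then x else y) = ![x, y, y] := by
  funext i; fin_cases i <;> simp

private lemma tup1 (x y : X) : (fun i : Fin 3 => if i = 1 then x else y) = ![y, x, y] := by
  funext i; fin_cases i <;> simp

private lemma tup2 (x y : X) : (fun i : Fin 3 => if i = 2 then x else y) = ![y, y, x] := by
  funext i; fin_cases i <;> simp

/-- Dichotomy for minors: identifying two of the three variables of a ternary clone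
member gives a binary clone member, hence a projection. -/
private lemma dich3 {F : ∀ n : ℕ, Set ((Fin n → X) → X)} (hF : IsClone F)
    (hbin : ∀ f ∈ F 2, IsProj 2 f) {f : (Fin 3 → X) → X} (hf : f ∈ F 3) (k : Fin 3) :
    (∀ x y : X, f (fun i => if i = k then x else y) = x) ∨
    (∀ x y : X, f (fun i => if i = k then x else y) = y) := by
  have hbF : (fun u : Fin 2 → X => f (fun i => u (if i = k then 0 else 1))) ∈ F 2 :=
    hF.2 3 2 (by norm_num) (by norm_num) f hf
      (fun i u => u (if i = k then 0 else 1)) (fun i => hF.1 2 _)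
  obtain ⟨t, ht⟩ := hbin _ hbF
  have key : ∀ x y : X, f (fun i => if i = k then x else y) = ![x, y] t := by
    intro x y
    have h := ht ![x, y]
    simp only at h
    rw [← h]
    congr 1
    funext i; split_ifs <;> simp
  fin_cases t
  · left; intro x y; simpa using key x y
  · right; intro x y; simpa using key x y

/-- Behaviour on non-injective triples for a function with pattern (S,D,D). -/
private lemma optA3 {g : (Fin 3 → X) → X}
    (h0 : ∀ x y : X, g ![x, y, y] = x)
    (h1 : ∀ x y : X, g ![y, x, y] = y)
    (h2 : ∀ x y : X, g ![y, y, x] = y) :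
    ∀ b : Fin 3 → X, ¬ Function.Injective b → g b = b 0 := by
  intro b hb
  rcases noninj_cases3 hb with h | h | h
  · rw [eqA3 h]; exact h0 (b 0) (b 1)
  · rw [eqB3 h]; exact h1 (b 1) (b 0)
  · rw [eqC3 h]; exact h2 (b 2) (b 0)

/-- Behaviour on non-injective triples for a function with pattern (D,D,D):
it agrees with `g3` there. -/
private lemma optB3 {g : (Fin 3 → X) → X}
    (h0 : ∀ x y : X, g ![x, y, y] = y)
    (h1 : ∀ x y : X, g ![y, x, y] = y)
    (h2 : ∀ x y : X, g ![y, y, x] = y) :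
    ∀ b : Fin 3 → X, ¬ Function.Injective b → g b = g3 b := by
  intro b hb
  by_cases h12 : b 1 = b 2
  · have hg3 : g3 b = b 1 := by simp [g3, h12]
    rw [hg3]; conv_lhs => rw [eqA3 h12]
    exact h0 (b 0) (b 1)
  · have hg3 : g3 b = b 0 := by simp [g3, h12]
    rcases noninj_cases3 hb with h | h | h
    · exact absurd h h12
    · rw [hg3]; conv_lhs => rw [eqB3 h]
      exact h1 (b 1) (b 0)
    · rw [hg3]; conv_lhs => rw [eqC3 h]
      exact h2 (b 2) (b 0)

private lemma memComp3 {F : ∀ n : ℕ, Set ((Fin n → X) → X)} (hF : IsClone F)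
    {f : (Fin 3 → X) → X} (hf : f ∈ F 3)
    {g0 g1 g2 : (Fin 3 → X) → X} (h0 : g0 ∈ F 3) (h1 : g1 ∈ F 3) (h2 : g2 ∈ F 3) :
    (fun x : Fin 3 → X => f ![g0 x, g1 x, g2 x]) ∈ F 3 := by
  have h := hF.2 3 3 (by norm_num) (by norm_num) f hf ![g0, g1, g2]
    (by intro i; fin_cases i <;> assumption)
  have e : (fun x : Fin 3 → X => f fun i => ![g0, g1, g2] i x)
      = fun x : Fin 3 → X => f ![g0 x, g1 x, g2 x] := by
    funext x; congr 1; funext i; fin_cases i <;> rfl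
  rwa [e] at h

private def c102 : Equiv.Perm (Fin 3) := ⟨![1,0,2], ![1,0,2], by decide, by decide⟩
private def c120 : Equiv.Perm (Fin 3) := ⟨![1,2,0], ![2,0,1], by decide, by decide⟩
private def c201 : Equiv.Perm (Fin 3) := ⟨![2,0,1], ![1,2,0], by decide, by decide⟩

private lemma permKey3 {a : Fin 3 → X} {f : (Fin 3 → X) → X}
    (hperm : ∀ σ : Equiv.Perm (Fin 3), f (a ∘ σ) = a (σ 0))
    (ρ σ : Equiv.Perm (Fin 3)) :
    f ![a (σ (ρ 0)), a (σ (ρ 1)), a (σ (ρ 2))] = a (σ (ρ 0)) := by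
  have h := hperm (ρ.trans σ)
  have e : a ∘ (ρ.trans σ) = ![a (σ (ρ 0)), a (σ (ρ 1)), a (σ (ρ 2))] := by
    funext i; fin_cases i <;> simp [Equiv.trans_apply]
  rw [e] at h
  simpa [Equiv.trans_apply] using h

end AuxStmt6

theorem stmt6 {X : Type*} [Fintype X] (hX : 3 ≤ Fintype.card X)
    (F : ∀ n : ℕ, Set ((Fin n → X) → X)) (hF : IsClone F) (hsym : SymClone F)
    (hbin : ∀ f ∈ F 2, IsProj 2 f) (htern : ∃ f ∈ F 3, ¬ IsProj 3 f)
    (fstar : (Fin 3 → X) → X) (hfstar : fstar ∈ F 3) (hnp : ¬ IsProj 3 fstar)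
    (a : Fin 3 → X) (ha : Function.Injective a)
    (hperm : ∀ σ : Equiv.Perm (Fin 3), fstar (a ∘ σ) = a (σ 0))
    (hnot : ¬ ∀ b : Fin 3 → X, ¬ Function.Injective b → fstar b = b 0) :
    ∃ g ∈ F 3,
      ((∀ b : Fin 3 → X, ¬ Function.Injective b → g b = b 0) ∧
        ∀ σ : Equiv.Perm (Fin 3), g (a ∘ σ) = a (σ 1)) ∨
      ((∀ b : Fin 3 → X, ¬ Function.Injective b → g b = g3 b) ∧
        ∀ σ : Equiv.Perm (Fin 3), g (a ∘ σ) = a (σ 0)) := by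
  have d0 := dich3 hF hbin hfstar 0
  have d1 := dich3 hF hbin hfstar 1
  have d2 := dich3 hF hbin hfstar 2
  simp only [tup0] at d0
  simp only [tup1] at d1
  simp only [tup2] at d2
  -- `c` lemmas for the explicit permutations
  have e102 : c102 0 = 1 ∧ c102 1 = 0 ∧ c102 2 = 2 := by decide
  have e120 : c120 0 = 1 ∧ c120 1 = 2 ∧ c120 2 = 0 := by decide
  have e201 : c201 0 = 2 ∧ c201 1 = 0 ∧ c201 2 = 1 := by decide
  rcases d0 with hS0 | hD0
  · rcases d1 with hS1 | hD1
    · rcases d2 with hS2 | hD2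
      · -- case (S,S,S)
        refine ⟨fun v => fstar ![v 2, fstar ![v 2, v 0, v 1], v 1], ?_, Or.inl ⟨?_, ?_⟩⟩
        · exact memComp3 hF hfstar (hF.1 3 2)
            (memComp3 hF hfstar (hF.1 3 2) (hF.1 3 0) (hF.1 3 1)) (hF.1 3 1)
        · apply optA3
          · intro x y
            show fstar ![y, fstar ![y, x, y], y] = x
            rw [hS1 x y]; exact hS1 x y
          · intro x y
            show fstar ![y, fstar ![y, y, x], x] = y
            rw [hS2 x y]; exact hS0 y x
          · intro x y
            show fstar ![x, fstar ![x, y, y], y] = y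
            rw [hS0 x y]; exact hS2 y x
        · intro σ
          show fstar ![a (σ 2), fstar ![a (σ 2), a (σ 0), a (σ 1)], a (σ 1)] = a (σ 1)
          have hin := permKey3 hperm c201 σ
          rw [e201.1, e201.2.1, e201.2.2] at hin
          rw [hin]
          exact hS2 (a (σ 1)) (a (σ 2))
      · -- case (S,S,D)
        refine ⟨fun v => fstar ![v 2, v 0, fstar ![v 2, v 0, v 1]], ?_, Or.inr ⟨?_, ?_⟩⟩
        · exact memComp3 hF hfstar (hF.1 3 2) (hF.1 3 0)
            (memComp3 hF hfstar (hF.1 3 2) (hF.1 3 0) (hF.1 3 1))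
        · apply optB3
          · intro x y
            show fstar ![y, x, fstar ![y, x, y]] = y
            rw [hS1 x y]; exact hS0 y x
          · intro x y
            show fstar ![y, y, fstar ![y, y, x]] = y
            rw [hD2 x y]; exact hS0 y y
          · intro x y
            show fstar ![x, y, fstar ![x, y, y]] = y
            rw [hS0 x y]; exact hS1 y x
        · intro σ
          show fstar ![a (σ 2), a (σ 0), fstar ![a (σ 2), a (σ 0), a (σ 1)]] = a (σ 0)
          have hin := permKey3 hperm c201 σ
          rw [e201.1, e201.2.1, e201.2.2] at hin
          rw [hin]
          exact hS1 (a (σ 0)) (a (σ 2))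
    · rcases d2 with hS2 | hD2
      · -- case (S,D,S)
        refine ⟨fun v => fstar ![v 1, fstar ![v 1, v 2, v 0], v 0], ?_, Or.inr ⟨?_, ?_⟩⟩
        · exact memComp3 hF hfstar (hF.1 3 1)
            (memComp3 hF hfstar (hF.1 3 1) (hF.1 3 2) (hF.1 3 0)) (hF.1 3 0)
        · apply optB3
          · intro x y
            show fstar ![y, fstar ![y, y, x], x] = y
            rw [hS2 x y]; exact hS0 y x
          · intro x y
            show fstar ![x, fstar ![x, y, y], y] = y
            rw [hS0 x y]; exact hS2 y x
          · intro x y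
            show fstar ![y, fstar ![y, x, y], y] = y
            rw [hD1 x y]; exact hS0 y y
        · intro σ
          show fstar ![a (σ 1), fstar ![a (σ 1), a (σ 2), a (σ 0)], a (σ 0)] = a (σ 0)
          have hin := permKey3 hperm c120 σ
          rw [e120.1, e120.2.1, e120.2.2] at hin
          rw [hin]
          exact hS2 (a (σ 0)) (a (σ 1))
      · -- case (S,D,D): contradiction with hnot
        exact absurd (optA3 hS0 hD1 hD2) hnot
  · rcases d1 with hS1 | hD1
    · rcases d2 with hS2 | hD2
      · -- case (D,S,S)
        refine ⟨fun v => fstar ![fstar v, v 1, v 2], ?_, Or.inr ⟨?_, ?_⟩⟩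
        · exact memComp3 hF hfstar hfstar (hF.1 3 1) (hF.1 3 2)
        · apply optB3
          · intro x y
            show fstar ![fstar ![x, y, y], y, y] = y
            rw [hD0 x y]; exact hD0 y y
          · intro x y
            show fstar ![fstar ![y, x, y], x, y] = y
            rw [hS1 x y]; exact hS2 y x
          · intro x y
            show fstar ![fstar ![y, y, x], y, x] = y
            rw [hS2 x y]; exact hS1 y x
        · intro σ
          show fstar ![fstar (a ∘ σ), a (σ 1), a (σ 2)] = a (σ 0)
          rw [hperm σ]
          simpa using permKey3 hperm 1 σ
      · -- case (D,S,D)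
        refine ⟨fun v => fstar ![v 1, v 0, v 2], ?_, Or.inl ⟨?_, ?_⟩⟩
        · exact memComp3 hF hfstar (hF.1 3 1) (hF.1 3 0) (hF.1 3 2)
        · apply optA3
          · intro x y
            show fstar ![y, x, y] = x
            exact hS1 x y
          · intro x y
            show fstar ![x, y, y] = y
            exact hD0 x y
          · intro x y
            show fstar ![y, y, x] = y
            exact hD2 x y
        · intro σ
          show fstar ![a (σ 1), a (σ 0), a (σ 2)] = a (σ 1)
          have hin := permKey3 hperm c102 σ
          rwa [e102.1, e102.2.1, e102.2.2] at hin
    · rcases d2 with hS2 | hD2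
      · -- case (D,D,S)
        refine ⟨fun v => fstar ![v 1, v 2, v 0], ?_, Or.inl ⟨?_, ?_⟩⟩
        · exact memComp3 hF hfstar (hF.1 3 1) (hF.1 3 2) (hF.1 3 0)
        · apply optA3
          · intro x y
            show fstar ![y, y, x] = x
            exact hS2 x y
          · intro x y
            show fstar ![x, y, y] = y
            exact hD0 x y
          · intro x y
            show fstar ![y, x, y] = y
            exact hD1 x y
        · intro σ
          show fstar ![a (σ 1), a (σ 2), a (σ 0)] = a (σ 1)
          have hin := permKey3 hperm c120 σ
          rwa [e120.1, e120.2.1, e120.2.2] at hin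
      · -- case (D,D,D)
        refine ⟨fstar, hfstar, Or.inr ⟨optB3 hD0 hD1 hD2, hperm⟩⟩
end

section
/- Let X be a finite set and k*, k integers with 0 ≤ k* < k < |X| and 2k − k* ≤ |X|. Let 𝒫 be a collection of k-element subsets of X such that for all k-element subsets Z, Y of X with |Z ∩ Y| = k*, Z ∈ 𝒫 if and only if Y ∈ 𝒫. Then either 𝒫 is empty, or 𝒫 consists of all k-element subsets of X, or else |X| = 2k, k* = 0, and for every k-element subset Y of X, Y ∈ 𝒫 if and only if X ∖ Y ∈ 𝒫. -/
/-!
Call `k`-sets `Z`, `Y` adjacent when `|Z ∩ Y| = k*`; the hypothesis says that `𝒫` is a union of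
connected components of this graph. Two `k`-sets `Y` and `Y - a + b` always have a common
neighbour `W`, except when `|X| = 2k` and `k* = 0` (then the only neighbour of `Y` is `Yᶜ`).
Hence a nonempty `𝒫` is closed under exchanging one element, and every `k`-set is reached from a
member of `𝒫` by such exchanges.
-/

open Finset

namespace Finset

variable {α : Type*} [DecidableEq α]

theorem union_inter_eq_left_of_subset_of_disjoint {S T Y : Finset α} (hS : S ⊆ Y)
    (hT : Disjoint T Y) : (S ∪ T) ∩ Y = S := by
  rw [union_inter_distrib_right, inter_eq_left.2 hS, disjoint_iff_inter_eq_empty.1 hT,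
    union_empty]

theorem card_insert_erase_of_mem_of_notMem {Y : Finset α} {a b : α} (ha : a ∈ Y)
    (hb : b ∉ Y) :
    (insert b (Y.erase a)).card = Y.card := by
  rw [card_insert_of_notMem (mt mem_of_mem_erase hb), card_erase_add_one ha]

theorem mem_of_exchange_closed {P : Set (Finset α)}
    (hP : ∀ Y ∈ P, ∀ a ∈ Y, ∀ b ∉ Y, insert b (Y.erase a) ∈ P)
    {Y Z : Finset α} (hcard : Y.card = Z.card) (hY : Y ∈ P) : Z ∈ P := by
  induction h : (Z \ Y).card using Nat.strong_induction_on generalizing Y with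
  | _ n ih =>
    obtain hZY | ⟨b, hb⟩ := (Z \ Y).eq_empty_or_nonempty
    · rwa [eq_of_subset_of_card_le (sdiff_eq_empty_iff_subset.1 hZY) hcard.le]
    obtain ⟨a, ha⟩ : (Y \ Z).Nonempty := by
      rw [← card_pos, card_sdiff_comm hcard]; exact card_pos.2 ⟨b, hb⟩
    rw [mem_sdiff] at ha hb
    have hsdiff : Z \ insert b (Y.erase a) = (Z \ Y).erase b := by
      ext x; simp only [mem_sdiff, mem_insert, mem_erase]; grind
    refine ih _ ?_ (by rwa [card_insert_erase_of_mem_of_notMem ha.1 hb.2])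
      (hP Y hY a ha.1 b hb.2) rfl
    rw [hsdiff, ← h]
    exact card_erase_lt_of_mem (mem_sdiff.2 hb)

variable [Fintype α]

theorem exists_card_inter_eq_of_exchange {Y : Finset α} {a b : α} {j : ℕ}
    (ha : a ∈ Y) (hb : b ∉ Y) (hj : j < Y.card) (hn : 2 * Y.card - j ≤ Fintype.card α)
    (hdeg : ¬(Fintype.card α = 2 * Y.card ∧ j = 0)) :
    ∃ W : Finset α, W.card = Y.card ∧ (W ∩ Y).card = j ∧
      (W ∩ insert b (Y.erase a)).card = j := by
  have hout : (insert b Y)ᶜ.card = Fintype.card α - Y.card - 1 := by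
    rw [card_compl, card_insert_of_notMem hb]; omega
  have hYout : Disjoint (insert b Y)ᶜ Y := disjoint_compl_left.mono_right (subset_insert b Y)
  have hY'out : Disjoint (insert b Y)ᶜ (insert b (Y.erase a)) :=
    disjoint_compl_left.mono_right (insert_subset_insert b (erase_subset a Y))
  rcases Nat.eq_zero_or_pos j with rfl | hj0
  · obtain ⟨T, hT, hTcard⟩ := exists_subset_card_eq (s := (insert b Y)ᶜ) (n := Y.card)
      (by omega)
    refine ⟨T, hTcard, ?_, ?_⟩
    · rw [disjoint_iff_inter_eq_empty.1 (hYout.mono_left hT), card_empty]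
    · rw [disjoint_iff_inter_eq_empty.1 (hY'out.mono_left hT), card_empty]
  obtain ⟨S, hS, hScard⟩ := exists_subset_card_eq (s := Y.erase a) (n := j - 1)
    (by rw [card_erase_of_mem ha]; omega)
  obtain ⟨T, hT, hTcard⟩ := exists_subset_card_eq (s := (insert b Y)ᶜ) (n := Y.card - j - 1)
    (by omega)
  have haS : a ∉ S := fun h => notMem_erase a Y (hS h)
  have hbT : b ∉ T := fun h => by simpa using hT h
  have hSY : S ⊆ Y := hS.trans (erase_subset a Y)
  -- Seen from `Y` the witness is `(S + a) ⊔ (T + b)`, seen from `Y - a + b` it is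
  -- `(S + b) ⊔ (T + a)`.
  have hW : insert a S ∪ insert b T = insert b S ∪ insert a T := by
    ext; simp only [mem_union, mem_insert]; tauto
  refine ⟨insert a S ∪ insert b T, ?_, ?_, ?_⟩
  · rw [card_union_of_disjoint, card_insert_of_notMem haS, card_insert_of_notMem hbT, hScard,
      hTcard]
    · omega
    · have hTY : Disjoint T Y := hYout.mono_left hT
      rw [disjoint_left] at hTY ⊢
      intro x hxa hxb
      rw [mem_insert] at hxa hxb
      grind
  · rw [union_inter_eq_left_of_subset_of_disjoint (insert_subset ha hSY),
      card_insert_of_notMem haS, hScard]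
    · omega
    · exact disjoint_insert_left.2 ⟨hb, hYout.mono_left hT⟩
  · rw [hW, union_inter_eq_left_of_subset_of_disjoint (insert_subset_insert b hS),
      card_insert_of_notMem (fun h => hb (hSY h)), hScard]
    · omega
    · exact disjoint_insert_left.2 ⟨by simp [ne_of_mem_of_not_mem ha hb], hY'out.mono_left hT⟩

end Finset

theorem stmt11_general {X : Type*} [Fintype X] [DecidableEq X] (kstar k : ℕ)
    (h1 : kstar < k)
    (h3 : 2 * k - kstar ≤ Fintype.card X)
    (P : Set (Finset X)) (hPk : ∀ Y ∈ P, Y.card = k)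
    (hP : ∀ Z Y : Finset X, Z.card = k → Y.card = k → (Z ∩ Y).card = kstar →
      (Z ∈ P ↔ Y ∈ P)) :
    P = ∅ ∨ P = {Y : Finset X | Y.card = k} ∨
      (Fintype.card X = 2 * k ∧ kstar = 0 ∧
        ∀ Y : Finset X, Y.card = k → (Y ∈ P ↔ Yᶜ ∈ P)) := by
  by_cases hdeg : Fintype.card X = 2 * k ∧ kstar = 0
  · refine Or.inr (Or.inr ⟨hdeg.1, hdeg.2, fun Y hY => hP Y Yᶜ hY ?_ ?_⟩)
    · rw [card_compl, hY, hdeg.1]; omega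
    · rw [inter_compl, card_empty, hdeg.2]
  have hexchange : ∀ Y ∈ P, ∀ a ∈ Y, ∀ b ∉ Y, insert b (Y.erase a) ∈ P := by
    intro Y hY a ha b hb
    have hYk := hPk Y hY
    obtain ⟨W, hWk, hWY, hWY'⟩ :=
      exists_card_inter_eq_of_exchange ha hb (j := kstar) (by omega) (by omega) (by rwa [hYk])
    rw [hYk] at hWk
    have hY'k := (card_insert_erase_of_mem_of_notMem ha hb).trans hYk
    exact (hP W _ hWk hY'k hWY').1 ((hP Y W hYk hWk (by rwa [inter_comm])).1 hY)
  rcases P.eq_empty_or_nonempty with hPempty | ⟨Y₀, hY₀⟩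
  · exact Or.inl hPempty
  refine Or.inr (Or.inl (Set.ext fun Z => ⟨hPk Z, fun hZ => ?_⟩))
  exact mem_of_exchange_closed hexchange ((hPk Y₀ hY₀).trans hZ.symm) hY₀

theorem stmt11 {X : Type*} [Fintype X] [DecidableEq X] (kstar k : ℕ)
    (h1 : kstar < k) (h2 : k < Fintype.card X)
    (h3 : 2 * k - kstar ≤ Fintype.card X)
    (P : Set (Finset X)) (hPk : ∀ Y ∈ P, Y.card = k)
    (hP : ∀ Z Y : Finset X, Z.card = k → Y.card = k → (Z ∩ Y).card = kstar →
      (Z ∈ P ↔ Y ∈ P)) :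
    P = ∅ ∨ P = {Y : Finset X | Y.card = k} ∨
      (Fintype.card X = 2 * k ∧ kstar = 0 ∧
        ∀ Y : Finset X, Y.card = k → (Y ∈ P ↔ Yᶜ ∈ P)) :=
  stmt11_general kstar k h1 h3 P hPk hP
end

section
/- Let X be a finite set with |X| ≥ 5 and let 𝓕 be a symmetric conservative clone on X some binary member of which is not a projection. Then for all distinct a₁, a₂ ∈ X there exist a binary f ∈ 𝓕 and elements b₁, b₂ ∈ X such that a₁, a₂, b₁, b₂ are pairwise distinct, f(a₁, a₂) = a₂, and f(b₁, b₂) = b₁. -/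
/-- The clone `F` is conservative: every member always returns one of its
arguments. -/
def Conservative {X : Type*} (F : ∀ n : ℕ, Set ((Fin n → X) → X)) : Prop :=
  ∀ n : ℕ, ∀ f ∈ F n, ∀ x : Fin n → X, ∃ i : Fin n, f x = x i

theorem stmt12 {X : Type*} [Fintype X] (hX : 5 ≤ Fintype.card X)
    (F : ∀ n : ℕ, Set ((Fin n → X) → X)) (hF : IsClone F) (hsym : SymClone F)
    (hcons : Conservative F) (hbin : ∃ f ∈ F 2, ¬ IsProj 2 f) :
    ∀ a₁ a₂ : X, a₁ ≠ a₂ → ∃ f ∈ F 2, ∃ b₁ b₂ : X,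
      a₁ ≠ b₁ ∧ a₁ ≠ b₂ ∧ a₂ ≠ b₁ ∧ a₂ ≠ b₂ ∧ b₁ ≠ b₂ ∧
      f ![a₁, a₂] = a₂ ∧ f ![b₁, b₂] = b₁ := by
  classical
  obtain ⟨f, hf, hnp⟩ := hbin
  have heta : ∀ z : Fin 2 → X, z = ![z 0, z 1] := by
    intro z; funext i; fin_cases i <;> simp
  have hconsf : ∀ p q : X, f ![p, q] = p ∨ f ![p, q] = q := by
    intro p q
    rcases Fin.exists_fin_two.mp (hcons 2 f hf ![p, q]) with hi | hi
    · left; simpa using hi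
    · right; simpa using hi
  -- a "type 2" pair exists
  have h2 : ∃ x y : X, x ≠ y ∧ f ![x, y] = y := by
    by_contra h
    push_neg at h
    refine hnp ⟨0, fun z => ?_⟩
    rcases eq_or_ne (z 0) (z 1) with he | he
    · rcases Fin.exists_fin_two.mp (hcons 2 f hf z) with hi | hi
      · exact hi
      · rw [hi, he]
    · rcases hconsf (z 0) (z 1) with hc | hc
      · rw [heta z]; exact hc
      · exact absurd hc (h (z 0) (z 1) he)
  -- a "type 1" pair exists
  have h1 : ∃ u v : X, u ≠ v ∧ f ![u, v] = u := by
    by_contra h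
    push_neg at h
    refine hnp ⟨1, fun z => ?_⟩
    rcases eq_or_ne (z 0) (z 1) with he | he
    · rcases Fin.exists_fin_two.mp (hcons 2 f hf z) with hi | hi
      · rw [hi, he]
      · exact hi
    · rcases hconsf (z 0) (z 1) with hc | hc
      · exact absurd hc (h (z 0) (z 1) he)
      · rw [heta z]; exact hc
  obtain ⟨x, y, hxy, hfxy⟩ := h2
  obtain ⟨u, v, huv, hfuv⟩ := h1
  have three : ∀ a b c : X, ({a, b, c} : Finset X).card ≤ 3 := by
    intro a b c
    refine (Finset.card_insert_le _ _).trans ?_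
    have h1 := Finset.card_insert_le b ({c} : Finset X)
    simp at h1 ⊢
    omega
  have key : ∃ p q r s : X, p ≠ q ∧ r ≠ s ∧ p ≠ r ∧ p ≠ s ∧ q ≠ r ∧ q ≠ s ∧
      f ![p, q] = q ∧ f ![r, s] = r := by
    by_cases hd : x ≠ u ∧ x ≠ v ∧ y ≠ u ∧ y ≠ v
    · exact ⟨x, y, u, v, hxy, huv, hd.1, hd.2.1, hd.2.2.1, hd.2.2.2, hfxy, hfuv⟩
    · have hcard : ({x, y, u, v} : Finset X).card ≤ 3 := by
        push_neg at hd
        by_cases e1 : x = u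
        · subst e1
          refine (Finset.card_le_card (fun a ha => ?_)).trans (three y x v)
          simp at ha ⊢; tauto
        by_cases e2 : x = v
        · subst e2
          refine (Finset.card_le_card (fun a ha => ?_)).trans (three y u x)
          simp at ha ⊢; tauto
        by_cases e3 : y = u
        · subst e3
          refine (Finset.card_le_card (fun a ha => ?_)).trans (three x y v)
          simp at ha ⊢; tauto
        · have e4 := hd e1 e2 e3
          subst e4
          refine (Finset.card_le_card (fun a ha => ?_)).trans (three x y u)
          simp at ha ⊢; tauto
      have hlt : 1 < (({x, y, u, v} : Finset X)ᶜ).card := by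
        rw [Finset.card_compl]
        omega
      obtain ⟨w, hw, z, hz, hwz⟩ := Finset.one_lt_card.mp hlt
      simp only [Finset.mem_compl, Finset.mem_insert, Finset.mem_singleton,
        not_or] at hw hz
      obtain ⟨hw1, hw2, hw3, hw4⟩ := hw
      obtain ⟨hz1, hz2, hz3, hz4⟩ := hz
      rcases hconsf w z with hc | hc
      · exact ⟨x, y, w, z, hxy, hwz, Ne.symm hw1, Ne.symm hz1, Ne.symm hw2,
          Ne.symm hz2, hfxy, hc⟩
      · exact ⟨w, z, u, v, hwz, huv, hw3, hw4, hz3, hz4, hc, hfuv⟩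
  obtain ⟨p, q, r, s, hpq, hrs, hpr, hps, hqr, hqs, hfq, hfr⟩ := key
  intro a₁ a₂ ha
  set π : Equiv.Perm X :=
    (Equiv.swap a₁ p).trans (Equiv.swap (Equiv.swap a₁ p a₂) q) with hπdef
  have hc : Equiv.swap a₁ p a₂ ≠ p := by
    intro h
    exact ha ((Equiv.swap a₁ p).injective
      (h.trans (Equiv.swap_apply_left a₁ p).symm)).symm
  have hπ1 : π a₁ = p := by
    show Equiv.swap (Equiv.swap a₁ p a₂) q (Equiv.swap a₁ p a₁) = p
    rw [Equiv.swap_apply_left, Equiv.swap_apply_of_ne_of_ne (Ne.symm hc) hpq]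
  have hπ2 : π a₂ = q := by
    show Equiv.swap (Equiv.swap a₁ p a₂) q (Equiv.swap a₁ p a₂) = q
    rw [Equiv.swap_apply_left]
  refine ⟨fun x : Fin 2 → X => π.symm (f fun i => π (x i)),
    hsym π 2 f hf, π.symm r, π.symm s, ?_, ?_, ?_, ?_, ?_, ?_, ?_⟩
  · rw [show a₁ = π.symm p by rw [← hπ1, Equiv.symm_apply_apply]]
    exact fun h => hpr (π.symm.injective h)
  · rw [show a₁ = π.symm p by rw [← hπ1, Equiv.symm_apply_apply]]
    exact fun h => hps (π.symm.injective h)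
  · rw [show a₂ = π.symm q by rw [← hπ2, Equiv.symm_apply_apply]]
    exact fun h => hqr (π.symm.injective h)
  · rw [show a₂ = π.symm q by rw [← hπ2, Equiv.symm_apply_apply]]
    exact fun h => hqs (π.symm.injective h)
  · exact fun h => hrs (π.symm.injective h)
  · have harg : (fun i => π (![a₁, a₂] i)) = ![p, q] := by
      funext i; fin_cases i <;> simp [hπ1, hπ2]
    show π.symm (f fun i => π (![a₁, a₂] i)) = a₂
    rw [harg, hfq, ← hπ2, Equiv.symm_apply_apply]
  · have harg : (fun i => π (![π.symm r, π.symm s] i)) = ![r, s] := by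
      funext i; fin_cases i <;> simp
    show π.symm (f fun i => π (![π.symm r, π.symm s] i)) = π.symm r
    rw [harg, hfr]
end

section
/- Let X be a finite set with |X| ≥ 5 and let 𝓕 be a symmetric conservative clone on X some binary member of which is not a projection. Then for all distinct a₁, a₂ ∈ X there exists a binary f ∈ 𝓕 such that f(a₁, a₂) = a₂, f(a₂, a₁) = a₁, and f(b₁, b₂) = b₁ for all distinct b₁, b₂ ∈ X with {b₁, b₂} ≠ {a₁, a₂}. -/
/-!
A conservative binary operation `g` is determined by the set `sndSet g` of pairs of distinct
elements on which it returns its second argument. By composition and symmetry of the clone, these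
sets are closed under union, intersection, `S ↦ offDiag \ Sᵀ` and relabelling by permutations.
Take a minimal nonempty such set `T`: it is contained in every set of the family that it meets.
Applied to the relabellings of `T`, this makes `T` a block for `Perm X` acting on ordered pairs;
applied to `offDiag \ (π⁻¹ T)ᵀ`, it shows that `swap c d` maps the transpose of `T` into `T`
whenever `(c, d) ∈ T`. With at least five points, these two facts move any pair of `T` other than
`(c, d)` and `(d, c)` to a pair disjoint from `(c, d)`, and then `T` is all of `offDiag`, which
the non-projection rules out. Hence `T ∪ (swap c d)⁻¹ T = {(c, d), (d, c)}`, and relabelling it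
to `{(a₁, a₂), (a₂, a₁)}` gives the required operation.
-/

open Set Equiv

section

variable {X : Type*}

lemma exists_pair_ne_avoiding_three [Fintype X] (hX : 5 ≤ Fintype.card X) (a b c : X) :
    ∃ u v : X, u ≠ v ∧ u ≠ a ∧ u ≠ b ∧ u ≠ c ∧ v ≠ a ∧ v ≠ b ∧ v ≠ c := by
  classical
  have hcard : 1 < (({a, b, c} : Finset X)ᶜ).card := by
    have := Finset.card_le_three (a := a) (b := b) (c := c)
    rw [Finset.card_compl]
    omega
  obtain ⟨u, hu, v, hv, huv⟩ := Finset.one_lt_card.1 hcard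
  simp only [Finset.mem_compl, Finset.mem_insert, Finset.mem_singleton, not_or] at hu hv
  exact ⟨u, v, huv, hu.1, hu.2.1, hu.2.2, hv.1, hv.2.1, hv.2.2⟩

lemma exists_subset_of_inter_nonempty {α : Type*} [Finite α] {𝒮 : Set (Set α)}
    (hinter : ∀ S ∈ 𝒮, ∀ S' ∈ 𝒮, S ∩ S' ∈ 𝒮) {S : Set α} (hS : S ∈ 𝒮) (hne : S.Nonempty) :
    ∃ T ∈ 𝒮, T.Nonempty ∧ ∀ M ∈ 𝒮, (T ∩ M).Nonempty → T ⊆ M := by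
  obtain ⟨T, hT⟩ := exists_minimal_of_wellFoundedLT (fun T => T ∈ 𝒮 ∧ T.Nonempty) ⟨S, hS, hne⟩
  refine ⟨T, hT.prop.1, hT.prop.2, fun M hM hTM => ?_⟩
  exact (hT.le_of_le ⟨hinter T hT.prop.1 M hM, hTM⟩ inter_subset_left).trans inter_subset_right

lemma preimage_map_pair (π : Perm X) (a b : X) :
    Prod.map π π ⁻¹' {(π a, π b), (π b, π a)} = {(a, b), (b, a)} := by
  ext ⟨x, y⟩
  simp [π.injective.eq_iff]

lemma union_preimage_swap_eq_pair [DecidableEq X] {T : Set (X × X)} {c d : X} (hcd : (c, d) ∈ T)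
    (hT : T ⊆ {(c, d), (d, c)}) :
    T ∪ Prod.map (swap c d) (swap c d) ⁻¹' T = {(c, d), (d, c)} := by
  refine (union_subset hT fun p hp => ?_).antisymm ?_
  · rcases hT hp with h | h <;> simp_all [Prod.ext_iff, swap_apply_eq_iff]
  · rintro _ (rfl | rfl)
    · exact .inl hcd
    · exact .inr (by simpa using hcd)

section Block

variable {T : Set (X × X)}
  (hblock : ∀ (π : Perm X) {r s}, r ∈ T → Prod.map π π r ∈ T → s ∈ T → Prod.map π π s ∈ T)
include hblock

lemma map_swap_mem [DecidableEq X] {u v a b : X} (huv : (u, v) ∈ T) (hau : a ≠ u) (hav : a ≠ v)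
    (hbu : b ≠ u) (hbv : b ≠ v) {q : X × X} (hq : q ∈ T) :
    Prod.map (swap a b) (swap a b) q ∈ T :=
  hblock _ huv (by simpa [swap_apply_of_ne_of_ne hau.symm hbu.symm,
    swap_apply_of_ne_of_ne hav.symm hbv.symm]) hq

-- Two swaps, each fixing `u` and `v`, carry `(c, d)` to `(x, y)`.
lemma mem_of_mem_of_disjoint [DecidableEq X] {u v c d x y : X} (huv : (u, v) ∈ T)
    (hcd : (c, d) ∈ T) (hcd' : c ≠ d) (hxy : x ≠ y) (hcu : c ≠ u) (hcv : c ≠ v) (hdu : d ≠ u)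
    (hdv : d ≠ v) (hxu : x ≠ u) (hxv : x ≠ v) (hyu : y ≠ u) (hyv : y ≠ v) : (x, y) ∈ T := by
  have hxd' := map_swap_mem hblock huv hcu hcv hxu hxv hcd
  simp only [Prod.map_apply, swap_apply_left] at hxd'
  set d' := swap c x d
  have hd'x : x ≠ d' := by simpa [d', swap_apply_left] using (swap c x).injective.ne hcd'
  have hd'u : d' ≠ u := by
    simpa [d', swap_apply_of_ne_of_ne hcu.symm hxu.symm] using (swap c x).injective.ne hdu
  have hd'v : d' ≠ v := by
    simpa [d', swap_apply_of_ne_of_ne hcv.symm hxv.symm] using (swap c x).injective.ne hdv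
  simpa [swap_apply_of_ne_of_ne hd'x hxy] using map_swap_mem hblock huv hd'u hd'v hyu hyv hxd'

variable [Fintype X] (hX : 5 ≤ Fintype.card X)
include hX

lemma offDiag_subset_of_disjoint {c d e f : X} (hcd : (c, d) ∈ T) (hef : (e, f) ∈ T)
    (hcd' : c ≠ d) (hef' : e ≠ f) (hce : c ≠ e) (hcf : c ≠ f) (hde : d ≠ e) (hdf : d ≠ f) :
    univ.offDiag ⊆ T := by
  classical
  rintro ⟨x, y⟩ ⟨-, -, hxy : x ≠ y⟩
  -- a pair inside `{c, d, z}` is reached through a pair `(u, v)` disjoint from `{c, d, z}`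
  have inside (z : X) (hx : x = c ∨ x = d ∨ x = z) (hy : y = c ∨ y = d ∨ y = z) : (x, y) ∈ T := by
    obtain ⟨u, v, huv, huc, hud, huz, hvc, hvd, hvz⟩ := exists_pair_ne_avoiding_three hX c d z
    have hT := mem_of_mem_of_disjoint hblock hcd hef hef' huv hce.symm hde.symm hcf.symm
      hdf.symm huc hud hvc hvd
    exact mem_of_mem_of_disjoint hblock hT hcd hcd' hxy huc.symm hvc.symm hud.symm hvd.symm
      (by rcases hx with rfl | rfl | rfl <;> exact Ne.symm ‹_›)
      (by rcases hx with rfl | rfl | rfl <;> exact Ne.symm ‹_›)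
      (by rcases hy with rfl | rfl | rfl <;> exact Ne.symm ‹_›)
      (by rcases hy with rfl | rfl | rfl <;> exact Ne.symm ‹_›)
  by_cases hx : x = c ∨ x = d
  · exact inside y (by tauto) (by tauto)
  by_cases hy : y = c ∨ y = d
  · exact inside x (by tauto) (by tauto)
  rw [not_or] at hx hy
  exact mem_of_mem_of_disjoint hblock hcd hef hef' hxy hce.symm hde.symm hcf.symm hdf.symm
    hx.1 hx.2 hy.1 hy.2

lemma offDiag_subset_of_path {a b e : X} (hab : (a, b) ∈ T ∨ (b, a) ∈ T) (hae : (a, e) ∈ T)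
    (heb : (e, b) ∈ T) (hab' : a ≠ b) (hea : e ≠ a) (heb' : e ≠ b) : univ.offDiag ⊆ T := by
  classical
  obtain ⟨u, v, huv, hua, hub, -, hva, hvb, -⟩ := exists_pair_ne_avoiding_three hX a b e
  have fix {w : X} (hwa : w ≠ a) (hwb : w ≠ b) {q : X × X} (hq : q ∈ T) :
      Prod.map (swap e w) (swap e w) q ∈ T := by
    rcases hab with h | h
    · exact map_swap_mem hblock h hea heb' hwa hwb hq
    · exact map_swap_mem hblock h heb' hea hwb hwa hq
  have hau : (a, u) ∈ T := by
    simpa [swap_apply_of_ne_of_ne hea.symm hua.symm] using fix hua hub hae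
  have hvb' : (v, b) ∈ T := by
    simpa [swap_apply_of_ne_of_ne heb'.symm hvb.symm] using fix hva hvb heb
  exact offDiag_subset_of_disjoint hblock hX hau hvb' hua.symm hvb hva.symm hab' huv hub

variable (htau : ∀ (π : Perm X) {r s}, r ∈ T → Prod.map π π r.swap ∉ T → s ∈ T →
  Prod.map π π s.swap ∉ T)
include htau

theorem offDiag_subset_or_subset_pair (hTD : T ⊆ univ.offDiag) {c d : X} (hcd : (c, d) ∈ T) :
    univ.offDiag ⊆ T ∨ T ⊆ {(c, d), (d, c)} := by
  classical
  refine or_iff_not_imp_right.2 fun hsub => ?_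
  obtain ⟨⟨x, y⟩, hq, hq'⟩ := not_subset.1 hsub
  have hcd' : c ≠ d := (hTD hcd).2.2
  have hxy : x ≠ y := (hTD hq).2.2
  simp only [mem_insert_iff, mem_singleton_iff, Prod.mk.injEq, not_or, not_and] at hq'
  -- otherwise `htau` would exclude `(swap c d d, swap c d c) = (c, d)` from `T`
  have hτ : (swap c d y, swap c d x) ∈ T := by
    by_contra h
    exact htau (swap c d) hq h hcd (by simpa [swap_apply_left, swap_apply_right] using hcd)
  rcases eq_or_ne x c with rfl | hxc
  · have hyd : y ≠ d := hq'.1 rfl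
    have hyd' : (y, d) ∈ T := by
      simpa [swap_apply_of_ne_of_ne hxy.symm hyd, swap_apply_left] using hτ
    exact offDiag_subset_of_path hblock hX (.inl hcd) hq hyd' hcd' hxy.symm hyd
  rcases eq_or_ne x d with rfl | hxd
  · have hyc : y ≠ c := hq'.2 rfl
    have hyc' : (y, c) ∈ T := by
      simpa [swap_apply_of_ne_of_ne hyc hxy.symm, swap_apply_right] using hτ
    exact offDiag_subset_of_path hblock hX (.inr hcd) hq hyc' hcd'.symm hxy.symm hyc
  rcases eq_or_ne y c with rfl | hyc
  · have hdx : (d, x) ∈ T := by simpa [swap_apply_of_ne_of_ne hxc hxd] using hτ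
    exact offDiag_subset_of_path hblock hX (.inr hcd) hdx hq hcd'.symm hxd hxc
  rcases eq_or_ne y d with rfl | hyd
  · have hcx : (c, x) ∈ T := by simpa [swap_apply_of_ne_of_ne hxc hxd] using hτ
    exact offDiag_subset_of_path hblock hX (.inl hcd) hcx hq hcd' hxc hxd
  exact offDiag_subset_of_disjoint hblock hX hcd hq hcd' hxy hxc.symm hyc.symm hxd.symm hyd.symm

end Block

variable {F : ∀ n : ℕ, Set ((Fin n → X) → X)}

lemma IsClone.comp₂ (hF : IsClone F) {g h₀ h₁ : (Fin 2 → X) → X} (hg : g ∈ F 2)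
    (h₀F : h₀ ∈ F 2) (h₁F : h₁ ∈ F 2) : (fun x => g ![h₀ x, h₁ x]) ∈ F 2 := by
  convert hF.2 2 2 two_pos two_pos g hg ![h₀, h₁] (Fin.forall_fin_two.2 ⟨h₀F, h₁F⟩) using 3
  ext i; fin_cases i <;> rfl

def sndSet (g : (Fin 2 → X) → X) : Set (X × X) :=
  {p | p.1 ≠ p.2 ∧ g ![p.1, p.2] = p.2}

lemma sndSet_subset_offDiag (g : (Fin 2 → X) → X) : sndSet g ⊆ univ.offDiag :=
  fun _ hp => ⟨trivial, trivial, hp.1⟩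

lemma SymClone.preimage_mem_sndSet (hsym : SymClone F) (π : Perm X) {S : Set (X × X)}
    (hS : S ∈ sndSet '' F 2) : Prod.map π π ⁻¹' S ∈ sndSet '' F 2 := by
  obtain ⟨g, hg, rfl⟩ := hS
  refine ⟨_, hsym π 2 g hg, ?_⟩
  ext ⟨x, y⟩
  have hπ : (fun i => π (![x, y] i)) = ![π x, π y] := by ext i; fin_cases i <;> rfl
  simp [sndSet, hπ, π.symm_apply_eq]

namespace Conservative

variable (hcons : Conservative F) {g : (Fin 2 → X) → X}
include hcons

lemma apply_eq_or (hg : g ∈ F 2) (x y : X) : g ![x, y] = x ∨ g ![x, y] = y := by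
  obtain ⟨i, hi⟩ := hcons 2 g hg ![x, y]
  fin_cases i
  exacts [Or.inl hi, Or.inr hi]

lemma apply_self (hg : g ∈ F 2) (x : X) : g ![x, x] = x :=
  (hcons.apply_eq_or hg x x).elim id id

lemma apply_of_notMem_sndSet (hg : g ∈ F 2) {x y : X} (h : (x, y) ∉ sndSet g) : g ![x, y] = x := by
  rcases hcons.apply_eq_or hg x y with hx | hy
  · exact hx
  · by_cases hxy : x = y
    · rw [hxy, hcons.apply_self hg]
    · exact absurd ⟨hxy, hy⟩ h

lemma isProj_of_sndSet_eq_empty (hg : g ∈ F 2) (h : sndSet g = ∅) : IsProj 2 g := by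
  refine ⟨0, fun x => ?_⟩
  rw [← show ![x 0, x 1] = x by ext i; fin_cases i <;> rfl]
  exact hcons.apply_of_notMem_sndSet hg (h ▸ notMem_empty _)

lemma isProj_of_sndSet_eq_offDiag (hg : g ∈ F 2) (h : sndSet g = univ.offDiag) :
    IsProj 2 g := by
  refine ⟨1, fun x => ?_⟩
  rw [← show ![x 0, x 1] = x by ext i; fin_cases i <;> rfl]
  by_cases hx : x 0 = x 1
  · rw [hx, hcons.apply_self hg]; rfl
  · exact (h ▸ ⟨trivial, trivial, hx⟩ : (x 0, x 1) ∈ sndSet g).2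

lemma apply_of_sndSet_eq_pair (hg : g ∈ F 2) {a b : X} (h : sndSet g = {(a, b), (b, a)}) :
    g ![a, b] = b ∧ g ![b, a] = a ∧
      ∀ b₁ b₂ : X, b₁ ≠ b₂ → ({b₁, b₂} : Set X) ≠ {a, b} → g ![b₁, b₂] = b₁ := by
  refine ⟨(h ▸ .inl rfl : (a, b) ∈ sndSet g).2, (h ▸ .inr rfl : (b, a) ∈ sndSet g).2,
    fun b₁ b₂ _ hne => hcons.apply_of_notMem_sndSet hg ?_⟩
  simpa [h, Set.pair_eq_pair_iff] using hne

variable (hF : IsClone F)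
include hF

lemma union_mem_sndSet {S S' : Set (X × X)} (hS : S ∈ sndSet '' F 2) (hS' : S' ∈ sndSet '' F 2) :
    S ∪ S' ∈ sndSet '' F 2 := by
  obtain ⟨g, hg, rfl⟩ := hS
  obtain ⟨h, hh, rfl⟩ := hS'
  refine ⟨_, hF.comp₂ hg hh (hF.1 2 1), ?_⟩
  ext ⟨x, y⟩
  rcases hcons.apply_eq_or hh x y with hx | hy
  · simp [sndSet, hx]
  · simp [sndSet, hy, hcons.apply_self hg]
    tauto

lemma inter_mem_sndSet {S S' : Set (X × X)} (hS : S ∈ sndSet '' F 2) (hS' : S' ∈ sndSet '' F 2) :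
    S ∩ S' ∈ sndSet '' F 2 := by
  obtain ⟨g, hg, rfl⟩ := hS
  obtain ⟨h, hh, rfl⟩ := hS'
  refine ⟨_, hF.comp₂ hg (hF.1 2 0) hh, ?_⟩
  ext ⟨x, y⟩
  rcases hcons.apply_eq_or hh x y with hx | hy
  · simp [sndSet, hx, hcons.apply_self hg]
  · simp [sndSet, hy]
    tauto

lemma offDiag_diff_preimage_swap_mem_sndSet {S : Set (X × X)} (hS : S ∈ sndSet '' F 2) :
    univ.offDiag \ Prod.swap ⁻¹' S ∈ sndSet '' F 2 := by
  obtain ⟨g, hg, rfl⟩ := hS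
  refine ⟨_, hF.comp₂ hg (hF.1 2 1) (hF.1 2 0), ?_⟩
  ext ⟨x, y⟩
  rcases hcons.apply_eq_or hg y x with h | h <;> simp [sndSet, h, ne_comm]

end Conservative

theorem exists_pair_mem_sndSet [Fintype X] (hX : 5 ≤ Fintype.card X) (hF : IsClone F)
    (hsym : SymClone F) (hcons : Conservative F) (hbin : ∃ f ∈ F 2, ¬ IsProj 2 f) :
    ∃ c d : X, c ≠ d ∧ {(c, d), (d, c)} ∈ sndSet '' F 2 := by
  classical
  obtain ⟨f, hf, hnp⟩ := hbin
  have hf_ne : (sndSet f).Nonempty :=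
    nonempty_iff_ne_empty.2 fun h => hnp (hcons.isProj_of_sndSet_eq_empty hf h)
  obtain ⟨T, hT, ⟨⟨c, d⟩, hcd⟩, hsub⟩ := exists_subset_of_inter_nonempty
    (fun _ hS _ hS' => hcons.inter_mem_sndSet hF hS hS') (mem_image_of_mem _ hf) hf_ne
  have hTD : T ⊆ univ.offDiag := by
    obtain ⟨g, -, rfl⟩ := hT
    exact sndSet_subset_offDiag g
  have hblock (π : Perm X) {r s} (hr : r ∈ T) (hπr : Prod.map π π r ∈ T) (hs : s ∈ T) :
      Prod.map π π s ∈ T :=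
    hsub _ (hsym.preimage_mem_sndSet π hT) ⟨r, hr, hπr⟩ hs
  have htau (π : Perm X) {r s} (hr : r ∈ T) (hπr : Prod.map π π r.swap ∉ T) (hs : s ∈ T) :
      Prod.map π π s.swap ∉ T :=
    (hsub _ (hcons.offDiag_diff_preimage_swap_mem_sndSet hF (hsym.preimage_mem_sndSet π hT))
      ⟨r, hr, hTD hr, hπr⟩ hs).2
  rcases offDiag_subset_or_subset_pair hblock hX htau hTD hcd with hfull | hpair
  · obtain ⟨p, hp⟩ := hf_ne
    have hTf := hsub _ (mem_image_of_mem _ hf) ⟨p, hfull (sndSet_subset_offDiag f hp), hp⟩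
    exact absurd (hcons.isProj_of_sndSet_eq_offDiag hf
      ((sndSet_subset_offDiag f).antisymm (hfull.trans hTf))) hnp
  · refine ⟨c, d, (hTD hcd).2.2, ?_⟩
    rw [← union_preimage_swap_eq_pair hcd hpair]
    exact hcons.union_mem_sndSet hF hT (hsym.preimage_mem_sndSet _ hT)

end

theorem stmt13 {X : Type*} [Fintype X] (hX : 5 ≤ Fintype.card X)
    (F : ∀ n : ℕ, Set ((Fin n → X) → X)) (hF : IsClone F) (hsym : SymClone F)
    (hcons : Conservative F) (hbin : ∃ f ∈ F 2, ¬ IsProj 2 f) :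
    ∀ a₁ a₂ : X, a₁ ≠ a₂ → ∃ f ∈ F 2,
      f ![a₁, a₂] = a₂ ∧ f ![a₂, a₁] = a₁ ∧
      ∀ b₁ b₂ : X, b₁ ≠ b₂ → ({b₁, b₂} : Set X) ≠ {a₁, a₂} → f ![b₁, b₂] = b₁ := by
  intro a₁ a₂ ha
  obtain ⟨c, d, hcd, hpair⟩ := exists_pair_mem_sndSet hX hF hsym hcons hbin
  obtain ⟨π, hπ⟩ := Perm.exists_extending_pair ![a₁, a₂] ![c, d]
    (injective_pair_iff_ne.2 ha) (injective_pair_iff_ne.2 hcd)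
  obtain ⟨g, hg, hgS⟩ := hsym.preimage_mem_sndSet π hpair
  rw [← show π a₁ = c from hπ 0, ← show π a₂ = d from hπ 1, preimage_map_pair] at hgS
  exact ⟨g, hg, hcons.apply_of_sndSet_eq_pair hg hgS⟩
end

section
/- Let X be a finite set with |X| ≥ 5 and let 𝓕 be a symmetric conservative clone on X some binary member of which is not a projection. Then for all pairwise distinct a₁, a₂, a₃ ∈ X there exists a ternary g ∈ 𝓕 such that g(b̄) = b₁ for every b̄ ∈ X³ with a repeated entry, and g(a₁, a₂, a₃) = a₂. -/
section Aux
variable {X : Type*} [Fintype X]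

lemma pick4 (hX : 5 ≤ Fintype.card X) (a b c d : X) :
    ∃ e : X, e ≠ a ∧ e ≠ b ∧ e ≠ c ∧ e ≠ d := by
  classical
  by_contra h
  push_neg at h
  have hsub : (Finset.univ : Finset X) ⊆ {a, b, c, d} := by
    intro e _
    simp only [Finset.mem_insert, Finset.mem_singleton]
    by_cases h1 : e = a; · exact Or.inl h1
    by_cases h2 : e = b; · exact Or.inr (Or.inl h2)
    by_cases h3 : e = c; · exact Or.inr (Or.inr (Or.inl h3))
    exact Or.inr (Or.inr (Or.inr (h e h1 h2 h3)))
  have h4 : ({a, b, c, d} : Finset X).card ≤ 4 := by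
    refine le_trans (Finset.card_insert_le _ _) ?_
    have := Finset.card_insert_le b ({c, d} : Finset X)
    have := Finset.card_insert_le c ({d} : Finset X)
    simp_all [Finset.card_singleton]
    omega
  have := Finset.card_le_card hsub
  rw [Finset.card_univ] at this
  omega

lemma exists_perm4 (a b c d a' b' c' d' : X)
    (h1 : a ≠ b) (h2 : a ≠ c) (h3 : a ≠ d) (h4 : b ≠ c) (h5 : b ≠ d) (h6 : c ≠ d)
    (k1 : a' ≠ b') (k2 : a' ≠ c') (k3 : a' ≠ d') (k4 : b' ≠ c') (k5 : b' ≠ d') (k6 : c' ≠ d') :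
    ∃ π : Equiv.Perm X, π a = a' ∧ π b = b' ∧ π c = c' ∧ π d = d' := by
  classical
  set π₁ : Equiv.Perm X := Equiv.swap a a' with hπ₁def
  have e1a : π₁ a = a' := Equiv.swap_apply_left a a'
  set π₂ : Equiv.Perm X := Equiv.swap (π₁ b) b' * π₁ with hπ₂def
  have e2a : π₂ a = a' := by
    have : a' ≠ π₁ b := by rw [← e1a]; exact fun h => h1 (π₁.injective h)
    simp only [hπ₂def, Equiv.Perm.mul_apply, e1a]
    exact Equiv.swap_apply_of_ne_of_ne this k1
  have e2b : π₂ b = b' := by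
    simp only [hπ₂def, Equiv.Perm.mul_apply]
    exact Equiv.swap_apply_left _ _
  set π₃ : Equiv.Perm X := Equiv.swap (π₂ c) c' * π₂ with hπ₃def
  have e3a : π₃ a = a' := by
    have : a' ≠ π₂ c := by rw [← e2a]; exact fun h => h2 (π₂.injective h)
    simp only [hπ₃def, Equiv.Perm.mul_apply, e2a]
    exact Equiv.swap_apply_of_ne_of_ne this k2
  have e3b : π₃ b = b' := by
    have : b' ≠ π₂ c := by rw [← e2b]; exact fun h => h4 (π₂.injective h)
    simp only [hπ₃def, Equiv.Perm.mul_apply, e2b]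
    exact Equiv.swap_apply_of_ne_of_ne this k4
  have e3c : π₃ c = c' := by
    simp only [hπ₃def, Equiv.Perm.mul_apply]
    exact Equiv.swap_apply_left _ _
  set π₄ : Equiv.Perm X := Equiv.swap (π₃ d) d' * π₃ with hπ₄def
  refine ⟨π₄, ?_, ?_, ?_, ?_⟩
  · have : a' ≠ π₃ d := by rw [← e3a]; exact fun h => h3 (π₃.injective h)
    simp only [hπ₄def, Equiv.Perm.mul_apply, e3a]
    exact Equiv.swap_apply_of_ne_of_ne this k3
  · have : b' ≠ π₃ d := by rw [← e3b]; exact fun h => h5 (π₃.injective h)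
    simp only [hπ₄def, Equiv.Perm.mul_apply, e3b]
    exact Equiv.swap_apply_of_ne_of_ne this k5
  · have : c' ≠ π₃ d := by rw [← e3c]; exact fun h => h6 (π₃.injective h)
    simp only [hπ₄def, Equiv.Perm.mul_apply, e3c]
    exact Equiv.swap_apply_of_ne_of_ne this k6
  · simp only [hπ₄def, Equiv.Perm.mul_apply]
    exact Equiv.swap_apply_left _ _

lemma exists_perm3 (hX : 5 ≤ Fintype.card X) (a b c a' b' c' : X)
    (h1 : a ≠ b) (h2 : a ≠ c) (h3 : b ≠ c)
    (k1 : a' ≠ b') (k2 : a' ≠ c') (k3 : b' ≠ c') :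
    ∃ π : Equiv.Perm X, π a = a' ∧ π b = b' ∧ π c = c' := by
  obtain ⟨d, hd1, hd2, hd3, -⟩ := pick4 hX a b c c
  obtain ⟨d', hd1', hd2', hd3', -⟩ := pick4 hX a' b' c' c'
  obtain ⟨π, p1, p2, p3, -⟩ := exists_perm4 a b c d a' b' c' d' h1 h2 hd1.symm h3 hd2.symm
    hd3.symm k1 k2 hd1'.symm k3 hd2'.symm hd3'.symm
  exact ⟨π, p1, p2, p3⟩

variable (F : ∀ n : ℕ, Set ((Fin n → X) → X))

lemma cons2 (hcons : Conservative F) {f} (hf : f ∈ F 2) (x y : X) :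
    f ![x, y] = x ∨ f ![x, y] = y := by
  obtain ⟨i, hi⟩ := hcons 2 f hf ![x, y]
  fin_cases i <;> simp at hi
  · exact Or.inl hi
  · exact Or.inr hi

lemma comp2 (hF : IsClone F) {m : ℕ} {f : (Fin 2 → X) → X} {g₁ g₂ : (Fin m → X) → X} (hm : 0 < m) (hf : f ∈ F 2)
    (h1 : g₁ ∈ F m) (h2 : g₂ ∈ F m) :
    (fun x : Fin m → X => f ![g₁ x, g₂ x]) ∈ F m := by
  have key : (fun x : Fin m → X => f fun i => (![g₁, g₂] : Fin 2 → (Fin m → X) → X) i x)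
      = (fun x : Fin m → X => f ![g₁ x, g₂ x]) := by
    funext x; congr 1; funext i; fin_cases i <;> simp
  rw [← key]
  exact hF.2 2 m (by norm_num) hm f hf ![g₁, g₂] (by intro i; fin_cases i <;> simpa)

def Rz (S : X → X → Prop) : Prop :=
  ∃ f ∈ F 2, ∀ x y : X, x ≠ y → (f ![x, y] = y ↔ S x y)

lemma Rz_top (hF : IsClone F) : Rz F (fun _ _ => True) :=
  ⟨fun x => x 1, hF.1 2 1, by intro x y _; simp⟩

lemma Rz_inter (hF : IsClone F) (hcons : Conservative F) {S T : X → X → Prop}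
    (hS : Rz F S) (hT : Rz F T) : Rz F (fun x y => S x y ∧ T x y) := by
  obtain ⟨f, hf, hfS⟩ := hS
  obtain ⟨g, hg, hgT⟩ := hT
  refine ⟨fun x => f ![x 0, g x], comp2 F hF (by norm_num) hf (hF.1 2 0) hg, ?_⟩
  intro x y hxy
  have hval : (fun x : Fin 2 → X => f ![x 0, g x]) ![x, y] = f ![x, g ![x, y]] := by simp
  rw [hval]
  by_cases hT' : T x y
  · have : g ![x, y] = y := (hgT x y hxy).2 hT'
    rw [this, hfS x y hxy]
    exact ⟨fun h => ⟨h, hT'⟩, fun h => h.1⟩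
  · have hgv : g ![x, y] = x := by
      rcases cons2 F hcons hg x y with h | h
      · exact h
      · exact absurd ((hgT x y hxy).1 h) hT'
    rw [hgv]
    have : f ![x, x] = x := by rcases cons2 F hcons hf x x with h | h <;> exact h
    rw [this]
    exact ⟨fun h => absurd h hxy, fun h => absurd h.2 hT'⟩

lemma Rz_tau (hF : IsClone F) (hcons : Conservative F) {S : X → X → Prop}
    (hS : Rz F S) : Rz F (fun x y => ¬ S y x) := by
  obtain ⟨f, hf, hfS⟩ := hS
  refine ⟨fun x => f ![x 1, x 0], comp2 F hF (by norm_num) hf (hF.1 2 1) (hF.1 2 0), ?_⟩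
  intro x y hxy
  have hval : (fun x : Fin 2 → X => f ![x 1, x 0]) ![x, y] = f ![y, x] := by simp
  rw [hval]
  constructor
  · intro h hS'
    have hx := (hfS y x hxy.symm).2 hS'
    exact hxy (hx.symm.trans h)
  · intro h
    rcases cons2 F hcons hf y x with h' | h'
    · exact h'
    · exact absurd ((hfS y x hxy.symm).1 h') h

lemma Rz_conj (hsym : SymClone F) {S : X → X → Prop} (hS : Rz F S) (π : Equiv.Perm X) :
    Rz F (fun x y => S (π x) (π y)) := by
  obtain ⟨f, hf, hfS⟩ := hS
  refine ⟨fun x => π.symm (f fun i => π (x i)), hsym π 2 f hf, ?_⟩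
  intro x y hxy
  have hval : (fun i => π ((![x, y] : Fin 2 → X) i)) = ![π x, π y] := by
    funext i; fin_cases i <;> simp
  simp only [hval]
  rw [Equiv.symm_apply_eq]
  exact hfS (π x) (π y) (fun h => hxy (π.injective h))

lemma Rz_init (hcons : Conservative F) (hbin : ∃ f ∈ F 2, ¬ IsProj 2 f) :
    ∃ S : X → X → Prop, ∃ a b u v : X,
      Rz F S ∧ a ≠ b ∧ S a b ∧ u ≠ v ∧ ¬ S u v := by
  obtain ⟨f, hf, hnp⟩ := hbin
  have hdiag : ∀ xv : Fin 2 → X, xv 0 = xv 1 → f xv = xv 0 := by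
    intro xv he
    obtain ⟨i, hi⟩ := hcons 2 f hf xv
    fin_cases i
    · exact hi
    · rw [he]; exact hi
  have hrepr : ∀ xv : Fin 2 → X, xv = ![xv 0, xv 1] := by
    intro xv; funext i; fin_cases i <;> simp
  have c1 : ∃ a b : X, a ≠ b ∧ f ![a, b] = b := by
    by_contra h
    push_neg at h
    apply hnp
    refine ⟨0, fun xv => ?_⟩
    rcases eq_or_ne (xv 0) (xv 1) with he | he
    · exact hdiag xv he
    · rcases cons2 F hcons hf (xv 0) (xv 1) with h' | h'
      · rw [hrepr xv]; simpa using h'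
      · exact absurd h' (h (xv 0) (xv 1) he)
  have c2 : ∃ u v : X, u ≠ v ∧ f ![u, v] = u := by
    by_contra h
    push_neg at h
    apply hnp
    refine ⟨1, fun xv => ?_⟩
    rcases eq_or_ne (xv 0) (xv 1) with he | he
    · rw [hdiag xv he, he]
    · rcases cons2 F hcons hf (xv 0) (xv 1) with h' | h'
      · exact absurd h' (h (xv 0) (xv 1) he)
      · rw [hrepr xv]; simpa using h'
  obtain ⟨a, b, hab, hfab⟩ := c1
  obtain ⟨u, v, huv, hfuv⟩ := c2
  refine ⟨fun x y => f ![x, y] = y, a, b, u, v, ⟨f, hf, fun _ _ _ => Iff.rfl⟩, hab, hfab, huv, ?_⟩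
  simp only [hfuv]
  exact huv

end Aux
section Sep
variable {X : Type*} [Fintype X] (F : ∀ n : ℕ, Set ((Fin n → X) → X))

/-- A-closure of a nonempty relation is everything. -/
lemma LA (hX : 5 ≤ Fintype.card X) (S : X → X → Prop)
    (hcl : ∀ x y z : X, x ≠ y → x ≠ z → y ≠ z → S x y → S y z)
    (a b : X) (hab : a ≠ b) (hS : S a b) : ∀ u v : X, u ≠ v → S u v := by
  have H1 : ∀ e, e ≠ a → e ≠ b → S b e := fun e he1 he2 => hcl a b e hab he1.symm he2.symm hS
  have H2 : ∀ e f, e ≠ a → e ≠ b → f ≠ b → f ≠ e → S e f := fun e f he1 he2 hf1 hf2 =>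
    hcl b e f he2.symm hf1.symm hf2.symm (H1 e he1 he2)
  intro u v huv
  obtain ⟨e, hea, heb, heu, hev⟩ := pick4 hX a b u v
  by_cases hub : u = b
  · by_cases hva : v = a
    · obtain ⟨f, hfa, hfb, hfe, -⟩ := pick4 hX a b e e
      have hef : S e f := H2 e f hea heb hfb hfe
      have hfb' : S f b := hcl e f b hfe.symm heb hfb hef
      have : S b a := hcl f b a hfb hfa hab.symm hfb'
      rw [hub, hva]
      exact this
    · have hvb : v ≠ b := fun h => huv (hub.trans h.symm)
      rw [hub]
      exact H1 v hva hvb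
  · have heu' : S e u := H2 e u hea heb hub heu.symm
    exact hcl e u v heu hev huv heu'

variable {S₀ : X → X → Prop} {a b u v : X}

lemma sepR (hF : IsClone F) (hcons : Conservative F) (hsym : SymClone F)
    (hX : 5 ≤ Fintype.card X)
    (hS₀ : Rz F S₀) (hab : a ≠ b) (hSab : S₀ a b) (huv : u ≠ v) (hu : ¬ S₀ u v)
    (c d e : X) (hcd : c ≠ d) (hce : c ≠ e) (hde : d ≠ e) :
    ∃ S, Rz F S ∧ S c d ∧ ¬ S c e := by
  by_contra hq
  push_neg at hq
  have hcl : ∀ S, Rz F S → ∀ x y z : X, x ≠ y → x ≠ z → y ≠ z → S x y → S x z := by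
    intro S hS x y z h1 h2 h3 hxy
    obtain ⟨π, p1, p2, p3⟩ := exists_perm3 hX c d e x y z hcd hce hde h1 h2 h3
    have := hq (fun p q => S (π p) (π q)) (Rz_conj F hsym hS π)
    simp only [p1, p2, p3] at this
    exact this hxy
  have fullrow : ∀ S, Rz F S → ∀ x y : X, x ≠ y → S x y → ∀ z, z ≠ x → S x z := by
    intro S hS x y hxy hxy' z hz
    by_cases hzy : z = y
    · rwa [hzy]
    · exact hcl S hS x y z hxy hz.symm (fun h => hzy h.symm) hxy'
  have RzE : Rz F (fun x y => ¬ S₀ y x) := Rz_tau F hF hcons hS₀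
  have rowA : ∀ z, z ≠ a → S₀ a z := fullrow S₀ hS₀ a b hab hSab
  have hU : ∀ w, w ≠ u → ¬ S₀ u w := by
    intro w hw hSw
    exact hu (fullrow S₀ hS₀ u w hw.symm hSw v huv.symm)
  obtain ⟨x₀, hx1, hx2, -, -⟩ := pick4 hX u a a a
  have hE1 : ¬ S₀ u x₀ := hU x₀ hx1
  have hE2 : ¬ S₀ a x₀ :=
    fullrow (fun x y => ¬ S₀ y x) RzE x₀ u hx1 hE1 a hx2.symm
  exact hE2 (rowA x₀ hx2)

lemma sepC (hF : IsClone F) (hcons : Conservative F) (hsym : SymClone F)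
    (hX : 5 ≤ Fintype.card X)
    (hS₀ : Rz F S₀) (hab : a ≠ b) (hSab : S₀ a b) (huv : u ≠ v) (hu : ¬ S₀ u v)
    (c d e : X) (hcd : c ≠ d) (hce : c ≠ e) (hde : d ≠ e) :
    ∃ S, Rz F S ∧ S c d ∧ ¬ S e d := by
  by_contra hq
  push_neg at hq
  have hcl : ∀ S, Rz F S → ∀ x y z : X, x ≠ y → x ≠ z → y ≠ z → S x y → S z y := by
    intro S hS x y z h1 h2 h3 hxy
    obtain ⟨π, p1, p2, p3⟩ := exists_perm3 hX c d e x y z hcd hce hde h1 h2 h3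
    have := hq (fun p q => S (π p) (π q)) (Rz_conj F hsym hS π)
    simp only [p1, p2, p3] at this
    exact this hxy
  have fullcol : ∀ S, Rz F S → ∀ x y : X, x ≠ y → S x y → ∀ z, z ≠ y → S z y := by
    intro S hS x y hxy hxy' z hz
    by_cases hzx : z = x
    · rwa [hzx]
    · exact hcl S hS x y z hxy (fun h => hzx h.symm) hz.symm hxy'
  have RzE : Rz F (fun x y => ¬ S₀ y x) := Rz_tau F hF hcons hS₀
  have hV : ∀ w, w ≠ v → ¬ S₀ w v := by
    intro w hw hSwv
    exact hu (fullcol S₀ hS₀ w v hw hSwv u huv)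
  have hE2 : ∀ w z, w ≠ v → z ≠ w → ¬ S₀ w z := by
    intro w z hwv hzw
    exact fullcol (fun x y => ¬ S₀ y x) RzE v w hwv.symm (hV w hwv) z hzw
  by_cases hav : a = v
  · obtain ⟨z₀, hz1, hz2, -, -⟩ := pick4 hX v b b b
    have : S₀ z₀ b := fullcol S₀ hS₀ a b hab hSab z₀ hz2
    exact hE2 z₀ b hz1 (fun h => hz2 h.symm) this
  · exact hE2 a b hav hab.symm hSab

lemma sepA (hF : IsClone F) (hcons : Conservative F) (hsym : SymClone F)
    (hX : 5 ≤ Fintype.card X)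
    (hS₀ : Rz F S₀) (hab : a ≠ b) (hSab : S₀ a b) (huv : u ≠ v) (hu : ¬ S₀ u v)
    (c d e : X) (hcd : c ≠ d) (hce : c ≠ e) (hde : d ≠ e) :
    ∃ S, Rz F S ∧ S c d ∧ ¬ S d e := by
  by_contra hq
  push_neg at hq
  have hcl : ∀ x y z : X, x ≠ y → x ≠ z → y ≠ z → S₀ x y → S₀ y z := by
    intro x y z h1 h2 h3 hxy
    obtain ⟨π, p1, p2, p3⟩ := exists_perm3 hX c d e x y z hcd hce hde h1 h2 h3
    have := hq (fun p q => S₀ (π p) (π q)) (Rz_conj F hsym hS₀ π)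
    simp only [p1, p2, p3] at this
    exact this hxy
  exact hu (LA hX S₀ hcl a b hab hSab u v huv)

lemma sepB (hF : IsClone F) (hcons : Conservative F) (hsym : SymClone F)
    (hX : 5 ≤ Fintype.card X)
    (hS₀ : Rz F S₀) (hab : a ≠ b) (hSab : S₀ a b) (huv : u ≠ v) (hu : ¬ S₀ u v)
    (c d e : X) (hcd : c ≠ d) (hce : c ≠ e) (hde : d ≠ e) :
    ∃ S, Rz F S ∧ S c d ∧ ¬ S e c := by
  by_contra hq
  push_neg at hq
  have hcl : ∀ x y z : X, x ≠ y → x ≠ z → y ≠ z → S₀ x y → S₀ z x := by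
    intro x y z h1 h2 h3 hxy
    obtain ⟨π, p1, p2, p3⟩ := exists_perm3 hX c d e x y z hcd hce hde h1 h2 h3
    have := hq (fun p q => S₀ (π p) (π q)) (Rz_conj F hsym hS₀ π)
    simp only [p1, p2, p3] at this
    exact this hxy
  have hcl' : ∀ x y z : X, x ≠ y → x ≠ z → y ≠ z → S₀ y x → S₀ z y := by
    intro x y z h1 h2 h3 h
    exact hcl y x z h1.symm h3 h2 h
  exact hu (LA hX (fun x y => S₀ y x) hcl' b a hab.symm hSab v u huv.symm)

lemma sepDis (hF : IsClone F) (hcons : Conservative F) (hsym : SymClone F)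
    (hX : 5 ≤ Fintype.card X)
    (hS₀ : Rz F S₀) (hab : a ≠ b) (hSab : S₀ a b) (huv : u ≠ v) (hu : ¬ S₀ u v)
    (c d e f : X) (hcd : c ≠ d) (hce : c ≠ e) (hcf : c ≠ f) (hde : d ≠ e)
    (hdf : d ≠ f) (hef : e ≠ f) :
    ∃ S, Rz F S ∧ S c d ∧ ¬ S e f := by
  by_contra hq
  push_neg at hq
  have hcl : ∀ x y z w : X, x ≠ y → x ≠ z → x ≠ w → y ≠ z → y ≠ w → z ≠ w →
      S₀ x y → S₀ z w := by
    intro x y z w h1 h2 h3 h4 h5 h6 hxy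
    obtain ⟨π, p1, p2, p3, p4⟩ := exists_perm4 c d e f x y z w hcd hce hcf hde hdf hef
      h1 h2 h3 h4 h5 h6
    have := hq (fun p q => S₀ (π p) (π q)) (Rz_conj F hsym hS₀ π)
    simp only [p1, p2, p3, p4] at this
    exact this hxy
  apply hu
  by_cases hsep : u ≠ a ∧ u ≠ b ∧ v ≠ a ∧ v ≠ b
  · exact hcl a b u v hab hsep.1.symm hsep.2.2.1.symm hsep.2.1.symm hsep.2.2.2.symm huv hSab
  · obtain ⟨s, hsa, hsb, hsu, hsv⟩ := pick4 hX a b u v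
    push_neg at hsep
    -- in every coincidence case, pick t avoiding the (at most 4) relevant points
    rcases Classical.em (u = a) with h | hua
    · obtain ⟨t, hta, htb, htv, hts⟩ := pick4 hX a b v s
      have h1 : S₀ s t := hcl a b s t hab hsa.symm hta.symm hsb.symm htb.symm
        (fun h => hts h.symm) hSab
      have htu : t ≠ u := by rw [h]; exact hta
      exact hcl s t u v (fun h => hts h.symm) hsu hsv htu htv huv h1
    rcases Classical.em (u = b) with h | hub
    · obtain ⟨t, hta, htb, htv, hts⟩ := pick4 hX a b v s
      have h1 : S₀ s t := hcl a b s t hab hsa.symm hta.symm hsb.symm htb.symm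
        (fun h => hts h.symm) hSab
      have htu : t ≠ u := by rw [h]; exact htb
      exact hcl s t u v (fun h => hts h.symm) hsu hsv htu htv huv h1
    rcases Classical.em (v = a) with h | hva
    · obtain ⟨t, hta, htb, htu, hts⟩ := pick4 hX a b u s
      have h1 : S₀ s t := hcl a b s t hab hsa.symm hta.symm hsb.symm htb.symm
        (fun h => hts h.symm) hSab
      have htv : t ≠ v := by rw [h]; exact hta
      exact hcl s t u v (fun h => hts h.symm) hsu hsv htu htv huv h1
    have h : v = b := by tauto
    obtain ⟨t, hta, htb, htu, hts⟩ := pick4 hX a b u s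
    have h1 : S₀ s t := hcl a b s t hab hsa.symm hta.symm hsb.symm htb.symm
      (fun h => hts h.symm) hSab
    have htv : t ≠ v := by rw [h]; exact htb
    exact hcl s t u v (fun h => hts h.symm) hsu hsv htu htv huv h1

end Sep
section Main
variable {X : Type*} [Fintype X] (F : ∀ n : ℕ, Set ((Fin n → X) → X))

lemma Delta (hF : IsClone F) (hcons : Conservative F) (hsym : SymClone F)
    (hX : 5 ≤ Fintype.card X) (hbin : ∃ f ∈ F 2, ¬ IsProj 2 f) (c d : X) (hcd : c ≠ d) :
    ∃ θ ∈ F 2, θ ![c, d] = d ∧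
      ∀ x y : X, ¬(x = c ∧ y = d) → ¬(x = d ∧ y = c) → θ ![x, y] = x := by
  classical
  obtain ⟨S₀, a, b, u, v, hS₀, hab, hSab, huv, hu⟩ := Rz_init F hcons hbin
  have sep : ∀ p : X × X, p.1 ≠ p.2 → p ≠ (c, d) → p ≠ (d, c) →
      ∃ S, Rz F S ∧ S c d ∧ ¬ S p.1 p.2 := by
    rintro ⟨x, y⟩ hxy h1 h2
    simp only [ne_eq, Prod.mk.injEq, not_and] at h1 h2
    by_cases hxc : x = c
    · obtain ⟨S, hS1, hS2, hS3⟩ := sepR F hF hcons hsym hX hS₀ hab hSab huv hu c d y hcd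
        (fun h => hxy (hxc.trans h)) (fun h => h1 hxc h.symm)
      exact ⟨S, hS1, hS2, by rw [hxc]; exact hS3⟩
    · by_cases hxd : x = d
      · obtain ⟨S, hS1, hS2, hS3⟩ := sepA F hF hcons hsym hX hS₀ hab hSab huv hu c d y hcd
          (fun h => h2 hxd h.symm) (fun h => hxy (hxd.trans h))
        exact ⟨S, hS1, hS2, by rw [hxd]; exact hS3⟩
      · by_cases hyd : y = d
        · obtain ⟨S, hS1, hS2, hS3⟩ := sepC F hF hcons hsym hX hS₀ hab hSab huv hu c d x hcd
            (fun h => hxc h.symm) (fun h => hxd h.symm)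
          exact ⟨S, hS1, hS2, by rw [hyd]; exact hS3⟩
        · by_cases hyc : y = c
          · obtain ⟨S, hS1, hS2, hS3⟩ := sepB F hF hcons hsym hX hS₀ hab hSab huv hu c d x hcd
              (fun h => hxc h.symm) (fun h => hxd h.symm)
            exact ⟨S, hS1, hS2, by rw [hyc]; exact hS3⟩
          · exact sepDis F hF hcons hsym hX hS₀ hab hSab huv hu c d x y hcd
              (fun h => hxc h.symm) (fun h => hyc h.symm) (fun h => hxd h.symm)
              (fun h => hyd h.symm) hxy
  have main : ∀ Q : Finset (X × X), (∀ p ∈ Q, p.1 ≠ p.2 ∧ p ≠ (c, d) ∧ p ≠ (d, c)) →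
      ∃ S, Rz F S ∧ S c d ∧ ∀ p ∈ Q, ¬ S p.1 p.2 := by
    intro Q
    induction Q using Finset.induction with
    | empty => exact fun _ => ⟨fun _ _ => True, Rz_top F hF, trivial, by simp⟩
    | @insert p Q hpQ ih =>
      intro hQ
      obtain ⟨S₁, hS₁, hS₁cd, hS₁n⟩ := ih (fun q hq => hQ q (Finset.mem_insert_of_mem hq))
      obtain ⟨hp1, hp2, hp3⟩ := hQ p (Finset.mem_insert_self p Q)
      obtain ⟨S₂, hS₂, hS₂cd, hS₂n⟩ := sep p hp1 hp2 hp3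
      refine ⟨fun x y => S₁ x y ∧ S₂ x y, Rz_inter F hF hcons hS₁ hS₂, ⟨hS₁cd, hS₂cd⟩, ?_⟩
      intro q hq
      rcases Finset.mem_insert.1 hq with h | h
      · subst h; exact fun hc => hS₂n hc.2
      · exact fun hc => hS₁n q h hc.1
  obtain ⟨S, hS, hScd, hSnone⟩ := main
    (Finset.univ.filter fun p => p.1 ≠ p.2 ∧ p ≠ (c, d) ∧ p ≠ (d, c))
    (fun p hp => (Finset.mem_filter.1 hp).2)
  obtain ⟨θ, hθ, hθS⟩ := hS
  refine ⟨θ, hθ, (hθS c d hcd).2 hScd, ?_⟩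
  intro x y h1 h2
  by_cases hxy : x = y
  · subst hxy
    rcases cons2 F hcons hθ x x with h | h <;> exact h
  · have hmem : (x, y) ∈ Finset.univ.filter
        fun p : X × X => p.1 ≠ p.2 ∧ p ≠ (c, d) ∧ p ≠ (d, c) := by
      refine Finset.mem_filter.2 ⟨Finset.mem_univ _, hxy, ?_, ?_⟩
      · simp only [ne_eq, Prod.mk.injEq, not_and]
        exact fun ha hb => h1 ⟨ha, hb⟩
      · simp only [ne_eq, Prod.mk.injEq, not_and]
        exact fun ha hb => h2 ⟨ha, hb⟩
    have hne : θ ![x, y] ≠ y := fun he => hSnone (x, y) hmem ((hθS x y hxy).1 he)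
    rcases cons2 F hcons hθ x y with h | h
    · exact h
    · exact absurd h hne

end Main

theorem stmt14 {X : Type*} [Fintype X] (hX : 5 ≤ Fintype.card X)
    (F : ∀ n : ℕ, Set ((Fin n → X) → X)) (hF : IsClone F) (hsym : SymClone F)
    (hcons : Conservative F) (hbin : ∃ f ∈ F 2, ¬ IsProj 2 f) :
    ∀ a₁ a₂ a₃ : X, a₁ ≠ a₂ → a₁ ≠ a₃ → a₂ ≠ a₃ → ∃ g ∈ F 3,
      (∀ b : Fin 3 → X, ¬ Function.Injective b → g b = b 0) ∧
      g ![a₁, a₂, a₃] = a₂ := by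
  intro a₁ a₂ a₃ h12 h13 h23
  obtain ⟨h, hhF, hmain, hside⟩ := Delta F hF hcons hsym hX hbin a₁ a₂ h12
  obtain ⟨w, hwF, wmain, wside⟩ := Delta F hF hcons hsym hX hbin a₃ a₂ h23.symm
  obtain ⟨m, hmF, mmain, mside⟩ := Delta F hF hcons hsym hX hbin a₁ a₃ h13
  refine ⟨fun x : Fin 3 → X => h ![x 0, w ![m ![x 0, x 2], x 1]], ?_, ?_, ?_⟩
  · have m3 : (fun x : Fin 3 → X => m ![x 0, x 2]) ∈ F 3 :=
      comp2 F hF (by norm_num) hmF (hF.1 3 0) (hF.1 3 2)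
    have w3 : (fun x : Fin 3 → X => w ![m ![x 0, x 2], x 1]) ∈ F 3 :=
      comp2 F hF (by norm_num) hwF m3 (hF.1 3 1)
    exact comp2 F hF (by norm_num) hhF (hF.1 3 0) w3
  · -- non-injective case
    intro b hb
    have hor : b 0 = b 1 ∨ b 0 = b 2 ∨ b 1 = b 2 := by
      by_contra hc
      push_neg at hc
      apply hb
      intro i j hij
      fin_cases i <;> fin_cases j <;>
        first
          | rfl
          | exact absurd hij hc.1
          | exact absurd hij hc.2.1
          | exact absurd hij hc.2.2
          | exact absurd hij.symm hc.1
          | exact absurd hij.symm hc.2.1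
          | exact absurd hij.symm hc.2.2
    show h ![b 0, w ![m ![b 0, b 2], b 1]] = b 0
    set x := b 0 with hxdef
    set y := b 1 with hydef
    set z := b 2 with hzdef
    by_cases hx1 : x = a₁
    · by_cases hz3 : z = a₃
      · have hy : y = a₁ ∨ y = a₃ := by
          rcases hor with h' | h' | h'
          · exact Or.inl (h'.symm.trans hx1)
          · exact absurd (hx1.symm.trans (h'.trans hz3)) h13
          · exact Or.inr (h'.trans hz3)
        have hM : m ![x, z] = a₃ := by rw [hx1, hz3]; exact mmain
        have hW : w ![a₃, y] = a₃ := by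
          refine wside a₃ y ?_ ?_
          · rintro ⟨-, hy2⟩
            rcases hy with h' | h'
            · exact h12 (h'.symm.trans hy2)
            · exact h23 (hy2.symm.trans h')
          · rintro ⟨hc, -⟩; exact h23 hc.symm
        have hH : h ![x, a₃] = x := by
          refine hside x a₃ ?_ ?_
          · rintro ⟨-, hc⟩; exact h23 hc.symm
          · rintro ⟨hc, -⟩; exact h12 (hx1.symm.trans hc).symm.symm
        rw [hM, hW, hH]
      · have hM : m ![x, z] = x := by
          refine mside x z ?_ ?_
          · rintro ⟨-, hc⟩; exact hz3 hc
          · rintro ⟨hc, -⟩; exact h13 (hx1.symm.trans hc)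
        have hW : w ![x, y] = x := by
          refine wside x y ?_ ?_
          · rintro ⟨hc, -⟩; exact h13 (hx1.symm.trans hc)
          · rintro ⟨hc, -⟩; exact h12 (hx1.symm.trans hc)
        have hH : h ![x, x] = x := by
          rcases cons2 F hcons hhF x x with h' | h' <;> exact h'
        rw [hM, hW, hH]
    · by_cases hx2 : x = a₂
      · have hM : m ![x, z] = x := by
          refine mside x z ?_ ?_
          · rintro ⟨hc, -⟩; exact hx1 hc
          · rintro ⟨hc, -⟩; exact h23 (hx2.symm.trans hc)
        rw [hM]
        have hW : w ![x, y] = x ∨ w ![x, y] = y := cons2 F hcons hwF x y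
        by_cases hy3 : y = a₃
        · rcases hW with h' | h'
          · rw [h']
            rcases cons2 F hcons hhF x x with h'' | h'' <;> exact h''
          · rw [h']
            refine hside x y ?_ ?_
            · rintro ⟨hc, -⟩; exact hx1 hc
            · rintro ⟨-, hc⟩; exact h13 (hc.symm.trans hy3).symm.symm
        · have hW' : w ![x, y] = x := by
            refine wside x y ?_ ?_
            · rintro ⟨hc, -⟩; exact h23 (hx2.symm.trans hc)
            · rintro ⟨-, hc⟩; exact hy3 hc
          rw [hW']
          rcases cons2 F hcons hhF x x with h'' | h'' <;> exact h''
      · exact hside x _ (fun hc => hx1 hc.1) (fun hc => hx2 hc.1)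
  · -- value at (a₁, a₂, a₃)
    show h ![(![a₁, a₂, a₃] : Fin 3 → X) 0,
      w ![m ![(![a₁, a₂, a₃] : Fin 3 → X) 0, (![a₁, a₂, a₃] : Fin 3 → X) 2],
        (![a₁, a₂, a₃] : Fin 3 → X) 1]] = a₂
    simp only [Matrix.cons_val_zero, Matrix.cons_val_one, Matrix.head_cons, Matrix.cons_val_two,
      Matrix.tail_cons]
    rw [mmain, wmain, hmain]
end

section
/- Let X be a finite set, k an integer with 2 ≤ k < |X|, and 𝔠 a family of choice functions on k-subsets of X. Let r ≥ 4 be an integer and assume that every (r−1)-averaging function for 𝔠 is a monarchy. Let f = (f_Y) be an r-averaging function for 𝔠. Then: (1) there exists ℓ ∈ {1, …, r} such that f_Y(ā) = a_ℓ for every k-element subset Y of X and every tuple ā ∈ Yʳ with a repeated entry; (2) if in addition f is not a monarchy, then r ≤ k. -/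
/-!
Identifying two coordinates `i ≠ j` of `f` gives an `(r - 1)`-averaging function, so on tuples
with `a i = a j` the function `f` is a projection onto some coordinate `ℓ(i, j)`. Evaluating `f` on
two-valued tuples shows `ℓ(i, j) ∈ S ↔ ℓ(i', j') ∈ S` whenever `S` separates neither pair. Two
disjoint pairs cannot both have their monarch inside (take `S` to be one of them), so some pair has
a monarch `m` outside it; the sets `S = {m}` and `S = {m, x}` then show that `m` serves every pair.
Hence `f Y a = a m` whenever `a` repeats an entry, which every `a : Fin r → Y` does once `r > k`.
-/

/-- `c` is a choice function on `k`-subsets of `X`: it assigns to each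
`k`-element subset `Y` of `X` an element of `Y`. -/
def IsChoice {X : Type*} (k : ℕ) (c : Finset X → X) : Prop :=
  ∀ Y : Finset X, Y.card = k → c Y ∈ Y

/-- The family `C` of choice functions is symmetric. -/
def SymFam {X : Type*} [DecidableEq X] (C : Set (Finset X → X)) : Prop :=
  ∀ π : Equiv.Perm X, ∀ c ∈ C, (fun Y : Finset X => π.symm (c (Y.image π))) ∈ C

/-- The family `C` is full: it contains every choice function on `k`-subsets. -/
def FullFam {X : Type*} (k : ℕ) (C : Set (Finset X → X)) : Prop :=
  ∀ c : Finset X → X, IsChoice k c → c ∈ C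

/-- `f` is an `r`-averaging function for `C`. -/
def IsAvg {X : Type*} (k r : ℕ) (C : Set (Finset X → X))
    (f : Finset X → (Fin r → X) → X) : Prop :=
  (∀ Y : Finset X, Y.card = k → ∀ x : Fin r → X, (∀ i, x i ∈ Y) → ∃ i, f Y x = x i) ∧
  (∀ c : Fin r → Finset X → X, (∀ i, c i ∈ C) →
    (fun Y : Finset X => f Y fun i => c i Y) ∈ C)

/-- The (non-simple) averaging function `f` is a monarchy. -/
def AvgMonarchy {X : Type*} (k r : ℕ) (f : Finset X → (Fin r → X) → X) : Prop :=
  ∃ t : Fin r, ∀ Y : Finset X, Y.card = k → ∀ x : Fin r → X, (∀ i, x i ∈ Y) → f Y x = x t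

def DiagMonarch {X : Type*} (k : ℕ) {r : ℕ} (f : Finset X → (Fin r → X) → X)
    (i j ℓ : Fin r) : Prop :=
  ∀ Y : Finset X, Y.card = k → ∀ a : Fin r → X, (∀ t, a t ∈ Y) → a i = a j → f Y a = a ℓ

section

variable {X : Type*} {k r : ℕ} {C : Set (Finset X → X)}

theorem IsAvg.comp {s : ℕ} {f : Finset X → (Fin r → X) → X} (hf : IsAvg k r C f)
    (e : Fin r → Fin s) : IsAvg k s C fun Y y => f Y (y ∘ e) := by
  refine ⟨fun Y hY y hy => ?_, fun c hc => hf.2 (c ∘ e) fun t => hc (e t)⟩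
  obtain ⟨t, ht⟩ := hf.1 Y hY (y ∘ e) fun t => hy (e t)
  exact ⟨e t, ht⟩

theorem exists_diagMonarch {n : ℕ}
    (hmon : ∀ g : Finset X → (Fin n → X) → X, IsAvg k n C g → AvgMonarchy k n g)
    {f : Finset X → (Fin (n + 1) → X) → X} (hf : IsAvg k (n + 1) C f)
    {i j : Fin (n + 1)} (hij : i ≠ j) : ∃ ℓ, DiagMonarch k f i j ℓ := by
  obtain ⟨i', rfl⟩ := Fin.exists_succAbove_eq hij
  let e : Fin (n + 1) → Fin n := Fin.insertNth j i' id
  obtain ⟨s, hs⟩ := hmon _ (hf.comp e)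
  refine ⟨j.succAbove s, fun Y hY a ha haij => ?_⟩
  have hfactor : Fin.removeNth j a ∘ e = a := by
    funext t
    induction t using Fin.succAboveCases j with
    | x => simp [e, Fin.removeNth, haij]
    | p t => simp [e, Fin.removeNth]
  simpa [hfactor, Fin.removeNth] using hs Y hY (Fin.removeNth j a) fun t => ha _

end

namespace DiagMonarch

variable {X : Type*} {k r : ℕ} {f : Finset X → (Fin r → X) → X} {i j ℓ : Fin r}

theorem symm (h : DiagMonarch k f i j ℓ) : DiagMonarch k f j i ℓ :=
  fun Y hY a ha haji => h Y hY a ha haji.symm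

theorem left_of_right (h : DiagMonarch k f i j j) : DiagMonarch k f i j i :=
  fun Y hY a ha haij => (h Y hY a ha haij).trans haij.symm

theorem mem_iff_mem {Y : Finset X} (hY : Y.card = k) (hk : 2 ≤ k) {i' j' ℓ' : Fin r}
    (h : DiagMonarch k f i j ℓ) (h' : DiagMonarch k f i' j' ℓ') (S : Finset (Fin r))
    (hS : i ∈ S ↔ j ∈ S) (hS' : i' ∈ S ↔ j' ∈ S) : ℓ ∈ S ↔ ℓ' ∈ S := by
  obtain ⟨u, hu, v, hv, huv⟩ := Finset.one_lt_card.mp (hY ▸ hk : 1 < Y.card)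
  let a : Fin r → X := fun t => if t ∈ S then u else v
  have ha : ∀ t, a t ∈ Y := fun t => by by_cases ht : t ∈ S <;> simp [a, ht, hu, hv]
  have hconst : ∀ t t', (t ∈ S ↔ t' ∈ S) → a t = a t' := fun t t' htt' => by
    simp only [a, htt']
  have hℓ : a ℓ = a ℓ' :=
    (h Y hY a ha (hconst i j hS)).symm.trans (h' Y hY a ha (hconst i' j' hS'))
  by_cases hℓS : ℓ ∈ S <;> by_cases hℓ'S : ℓ' ∈ S <;> simp [a, hℓS, hℓ'S, huv, huv.symm] at hℓ ⊢

end DiagMonarch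

section

variable {X : Type*} {k r : ℕ} {f : Finset X → (Fin r → X) → X} {Y : Finset X}

theorem exists_diagMonarch_outside (hY : Y.card = k) (hk : 2 ≤ k) (hr : 4 ≤ r)
    (hex : ∀ i j : Fin r, i ≠ j → ∃ ℓ, DiagMonarch k f i j ℓ) :
    ∃ i j m, m ≠ i ∧ m ≠ j ∧ DiagMonarch k f i j m := by
  let a : Fin r := ⟨0, by omega⟩
  let b : Fin r := ⟨1, by omega⟩
  let c : Fin r := ⟨2, by omega⟩
  let d : Fin r := ⟨3, by omega⟩
  obtain ⟨ℓ, hℓ⟩ := hex a b (by simp [a, b])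
  obtain ⟨ℓ', hℓ'⟩ := hex c d (by simp [c, d])
  by_contra! hinner
  have hℓab : ℓ = a ∨ ℓ = b := by
    by_contra! hout
    exact hinner a b ℓ hout.1 hout.2 hℓ
  have hℓ'cd : ℓ' = c ∨ ℓ' = d := by
    by_contra! hout
    exact hinner c d ℓ' hout.1 hout.2 hℓ'
  have := hℓ.mem_iff_mem hY hk hℓ' {a, b} (by simp) (by simp [a, b, c, d])
  rcases hℓab with rfl | rfl <;> rcases hℓ'cd with rfl | rfl <;> simp [a, b, c, d] at this

theorem DiagMonarch.of_ne_of_ne (hY : Y.card = k) (hk : 2 ≤ k) (hr : 4 ≤ r)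
    (hex : ∀ i j : Fin r, i ≠ j → ∃ ℓ, DiagMonarch k f i j ℓ) {i₀ j₀ m : Fin r}
    (h₀ : DiagMonarch k f i₀ j₀ m) (hi₀ : m ≠ i₀) (hj₀ : m ≠ j₀) {i j : Fin r} (hij : i ≠ j) :
    DiagMonarch k f i j m := by
  have havoid : ∀ i j, i ≠ j → m ≠ i → m ≠ j → DiagMonarch k f i j m := by
    intro i j hij hi hj
    obtain ⟨ℓ, hℓ⟩ := hex i j hij
    have hℓm := hℓ.mem_iff_mem hY hk h₀ {m} (by simp [hi.symm, hj.symm])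
      (by simp [hi₀.symm, hj₀.symm])
    rwa [Finset.mem_singleton.mp (hℓm.mpr (Finset.mem_singleton_self m))] at hℓ
  have hwith : ∀ x, x ≠ m → DiagMonarch k f m x m := by
    intro x hx
    have hcard : 1 < ({m, x}ᶜ : Finset (Fin r)).card := by
      rw [Finset.card_compl, Fintype.card_fin]
      have := Finset.card_le_two (a := m) (b := x)
      omega
    obtain ⟨y, hy, z, hz, hyz⟩ := Finset.one_lt_card.mp hcard
    simp only [Finset.mem_compl, Finset.mem_insert, Finset.mem_singleton, not_or] at hy hz
    obtain ⟨ℓ, hℓ⟩ := hex m x hx.symm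
    have hℓmx := hℓ.mem_iff_mem hY hk (havoid y z hyz (Ne.symm hy.1) (Ne.symm hz.1)) {m, x}
      (by simp) (by simp [hy, hz])
    obtain rfl | rfl : ℓ = m ∨ ℓ = x := by simpa using hℓmx
    · exact hℓ
    · exact hℓ.left_of_right
  rcases eq_or_ne i m with rfl | him
  · exact hwith j hij.symm
  rcases eq_or_ne j m with rfl | hjm
  · exact (hwith i hij).symm
  exact havoid i j hij him.symm hjm.symm

end

theorem stmt18_general {X : Type*} [Fintype X] (k : ℕ)
    (hk1 : 2 ≤ k) (hk2 : k < Fintype.card X)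
    (C : Set (Finset X → X))
    (r : ℕ) (hr : 4 ≤ r)
    (hmon : ∀ g : Finset X → (Fin (r - 1) → X) → X,
      IsAvg k (r - 1) C g → AvgMonarchy k (r - 1) g)
    (f : Finset X → (Fin r → X) → X) (hf : IsAvg k r C f) :
    (∃ ℓ : Fin r, ∀ Y : Finset X, Y.card = k → ∀ a : Fin r → X, (∀ i, a i ∈ Y) →
        ¬ Function.Injective a → f Y a = a ℓ) ∧
      (¬ AvgMonarchy k r f → r ≤ k) := by
  obtain ⟨Y₀, -, hY₀⟩ :=
    Finset.exists_subset_card_eq (s := Finset.univ) (n := k) (by simpa using hk2.le)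
  obtain ⟨n, rfl⟩ : ∃ n, r = n + 1 := ⟨r - 1, by omega⟩
  have hex : ∀ i j : Fin (n + 1), i ≠ j → ∃ ℓ, DiagMonarch k f i j ℓ :=
    fun i j hij => exists_diagMonarch hmon hf hij
  obtain ⟨i₀, j₀, m, hi₀, hj₀, h₀⟩ := exists_diagMonarch_outside hY₀ hk1 hr hex
  have hm : ∀ i j, i ≠ j → DiagMonarch k f i j m :=
    fun i j hij => h₀.of_ne_of_ne hY₀ hk1 hr hex hi₀ hj₀ hij
  refine ⟨⟨m, fun Y hY a ha hninj => ?_⟩, fun hnot => ?_⟩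
  · obtain ⟨i, j, haij, hij⟩ := Function.not_injective_iff.mp hninj
    exact hm i j hij Y hY a ha haij
  · by_contra! hkr
    refine hnot ⟨m, fun Y hY a ha => ?_⟩
    obtain ⟨i, -, j, -, hij, haij⟩ := Finset.exists_ne_map_eq_of_card_lt_of_maps_to
      (s := Finset.univ) (by simpa [hY] using hkr) fun i _ => ha i
    exact hm i j hij Y hY a ha haij

theorem stmt18 {X : Type*} [Fintype X] [DecidableEq X] (k : ℕ)
    (hk1 : 2 ≤ k) (hk2 : k < Fintype.card X)
    (C : Set (Finset X → X)) (hch : ∀ c ∈ C, IsChoice k c)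
    (r : ℕ) (hr : 4 ≤ r)
    (hmon : ∀ g : Finset X → (Fin (r - 1) → X) → X,
      IsAvg k (r - 1) C g → AvgMonarchy k (r - 1) g)
    (f : Finset X → (Fin r → X) → X) (hf : IsAvg k r C f) :
    (∃ ℓ : Fin r, ∀ Y : Finset X, Y.card = k → ∀ a : Fin r → X, (∀ i, a i ∈ Y) →
        ¬ Function.Injective a → f Y a = a ℓ) ∧
      (¬ AvgMonarchy k r f → r ≤ k) :=
  stmt18_general k hk1 hk2 C r hr hmon f hf
end

section
/- Let X be a finite set, k an integer with 1 ≤ k < |X|, and 𝔠 a nonempty symmetric family of choice functions on k-subsets of X. Let r be an integer with 4 ≤ r ≤ k; assume that for every s with 2 ≤ s < r every s-averaging function for 𝔠 is a monarchy, and that some r-averaging function for 𝔠 is not a monarchy. Then for every k-element subset Y of X and every injective tuple ā = (a₁, …, a_r) ∈ Yʳ there is an r-averaging function f = (f_Z) for 𝔠 such that f_Y(ā) = a₂ and f_Z(b̄) = b₁ for every k-element subset Z of X and every b̄ ∈ Zʳ with a repeated entry. -/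
section

open Function Finset Equiv

namespace Equiv.Perm

theorem exists_extending_pair_image_eq {α ι : Type*} [DecidableEq α] [Finite ι]
    {s t : Finset α} (hst : #s = #t) {u v : ι → α} (hu : Injective u) (hv : Injective v)
    (hus : ∀ i, u i ∈ s) (hvt : ∀ i, v i ∈ t) :
    ∃ π : Perm α, (∀ i, π (u i) = v i) ∧ s.image π = t := by
  obtain ⟨π₁, hπ₁⟩ := exists_map_finset_eq s t hst
  have hπ₁s : s.image π₁ = t := by rwa [map_eq_image] at hπ₁
  have hπ₁u : ∀ i, π₁ (u i) ∈ t := fun i => hπ₁s ▸ mem_image_of_mem _ (hus i)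
  obtain ⟨τ, hτ⟩ := exists_extending_pair (β := t) (fun i => ⟨π₁ (u i), hπ₁u i⟩)
    (fun i => ⟨v i, hvt i⟩) (fun i j h => hu (π₁.injective (congrArg Subtype.val h)))
    (fun i j h => hv (congrArg Subtype.val h))
  refine ⟨π₁.trans (ofSubtype τ), fun i => ?_, ?_⟩
  · simp [ofSubtype_apply_of_mem τ (hπ₁u i), hτ]
  · have hsub : t.image (ofSubtype τ) ⊆ t := by
      simp only [image_subset_iff]
      exact fun x hx => by simp [ofSubtype_apply_of_mem τ hx]
    rw [Equiv.coe_trans, ← image_image, hπ₁s]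
    exact eq_of_subset_of_card_le hsub (card_image_of_injective _ (ofSubtype τ).injective).ge

end Equiv.Perm

def CoherentOnPairs {ι : Type*} (m : ι → ι → ι) : Prop :=
  ∀ i j u v (σ : ι → ι), i ≠ j → u ≠ v → σ i = σ j → σ u = σ v → σ (m i j) = σ (m u v)

namespace CoherentOnPairs

variable {ι : Type*} [DecidableEq ι] {m : ι → ι → ι}

theorem eq_or_mem_union (hm : CoherentOnPairs m) {i j u v : ι} (hij : i ≠ j) (huv : u ≠ v) :
    m u v = m i j ∨ (m u v ∈ ({i, j, u, v} : Finset ι) ∧ m i j ∈ ({i, j, u, v} : Finset ι)) := by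
  have h := hm i j u v (fun t => if t ∈ ({i, j, u, v} : Finset ι) then i else t) hij huv
    (by simp) (by simp)
  by_cases h₁ : m i j ∈ ({i, j, u, v} : Finset ι) <;>
    by_cases h₂ : m u v ∈ ({i, j, u, v} : Finset ι) <;> simp_all

theorem mem_iff_mem_of_disjoint (hm : CoherentOnPairs m) {i j u v : ι} (hij : i ≠ j)
    (huv : u ≠ v) (hiu : i ≠ u) (hiv : i ≠ v) (hju : j ≠ u) (hjv : j ≠ v) :
    m i j ∈ ({u, v} : Finset ι) ↔ m u v ∈ ({u, v} : Finset ι) := by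
  have h := hm i j u v
    (fun t => if t ∈ ({u, v} : Finset ι) then u else if t ∈ ({i, j} : Finset ι) then i else t)
    hij huv (by simp [hiu, hiv, hju, hjv]) (by simp)
  grind

theorem exists_notMem_pair [Fintype ι] (hι : 4 ≤ Fintype.card ι) (hm : CoherentOnPairs m) :
    ∃ i j, i ≠ j ∧ m i j ∉ ({i, j} : Finset ι) := by
  obtain ⟨e⟩ := Embedding.nonempty_of_card_le (α := Fin 4) (by simpa using hι)
  have he : ∀ a b : Fin 4, a ≠ b → e a ≠ e b := fun a b => e.injective.ne
  have := hm.mem_iff_mem_of_disjoint (he 0 1 (by decide)) (he 2 3 (by decide))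
    (he 0 2 (by decide)) (he 0 3 (by decide)) (he 1 2 (by decide)) (he 1 3 (by decide))
  by_cases h01 : m (e 0) (e 1) ∈ ({e 0, e 1} : Finset ι)
  · refine ⟨e 2, e 3, he 2 3 (by decide), fun h23 => ?_⟩
    have := he 0 2 (by decide); have := he 0 3 (by decide)
    have := he 1 2 (by decide); have := he 1 3 (by decide)
    grind
  · exact ⟨e 0, e 1, he 0 1 (by decide), h01⟩

theorem eq_or_mem_of_notMem [Fintype ι] (hι : 4 ≤ Fintype.card ι) (hm : CoherentOnPairs m)
    {i j : ι} (hij : i ≠ j) (hext : m i j ∉ ({i, j} : Finset ι)) {u v : ι} (huv : u ≠ v) :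
    m u v = m i j ∨ (m u v ∈ ({u, v} : Finset ι) ∧ m i j ∈ ({u, v} : Finset ι)) := by
  by_cases hmuv : m i j ∈ ({u, v} : Finset ι)
  · refine .inr ⟨?_, hmuv⟩
    by_contra ha
    set a := m u v
    have haij : a ∈ ({i, j} : Finset ι) := by
      have := hm.eq_or_mem_union hij huv
      grind
    obtain ⟨w, -, hw⟩ := exists_mem_notMem_of_card_lt_card (s := {u, v, a}) (t := univ)
      (card_le_three.trans_lt (by rw [card_univ]; omega))
    obtain ⟨hau, hav⟩ : a ≠ u ∧ a ≠ v := by simpa using ha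
    obtain ⟨hwu, hwv, hwa⟩ : w ≠ u ∧ w ≠ v ∧ w ≠ a := by simpa using hw
    have hmaw : m a w = m i j := by
      have := hm.eq_or_mem_union hij hwa.symm
      grind
    -- The disjoint pairs `(u, v)` and `(a, w)` would each have their monarch in the other.
    have := hm.mem_iff_mem_of_disjoint huv hwa.symm hau.symm hwu.symm hav.symm hwv.symm
    grind
  · have := hm.eq_or_mem_union hij huv
    grind

theorem exists_apply_eq [Fintype ι] (hι : 4 ≤ Fintype.card ι) (hm : CoherentOnPairs m)
    {β : Type*} : ∃ m₀, ∀ u v, u ≠ v → ∀ x : ι → β, x u = x v → x (m u v) = x m₀ := by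
  obtain ⟨i, j, hij, hext⟩ := hm.exists_notMem_pair hι
  refine ⟨m i j, fun u v huv x hx => ?_⟩
  rcases hm.eq_or_mem_of_notMem hι hij hext huv with h | ⟨h₁, h₂⟩
  · rw [h]
  · simp only [mem_insert, mem_singleton] at h₁ h₂
    rcases h₁ with h₁ | h₁ <;> rcases h₂ with h₂ | h₂ <;> simp [h₁, h₂, hx]

end CoherentOnPairs

variable {X : Type*} {k : ℕ} {C : Set (Finset X → X)}

def IsDiagMonarch {r : ℕ} (k : ℕ) (f : Finset X → (Fin r → X) → X) (i j m : Fin r) : Prop :=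
  ∀ Z : Finset X, Z.card = k → ∀ x : Fin r → X, (∀ t, x t ∈ Z) → x i = x j → f Z x = x m

theorem IsDiagMonarch.apply_eq_apply {r : ℕ} {f : Finset X → (Fin r → X) → X}
    {i j u v m m' : Fin r}
    (h₁ : IsDiagMonarch k f i j m) (h₂ : IsDiagMonarch k f u v m') {Y : Finset X}
    (hY : Y.card = k) {a : Fin r → X} (ha : ∀ t, a t ∈ Y) (ha_inj : Injective a)
    {σ : Fin r → Fin r} (hσ₁ : σ i = σ j) (hσ₂ : σ u = σ v) : σ m = σ m' :=
  ha_inj <| (h₁ Y hY (a ∘ σ) (fun _ => ha _) (congrArg a hσ₁)).symm.trans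
    (h₂ Y hY (a ∘ σ) (fun _ => ha _) (congrArg a hσ₂))

namespace IsAvg

theorem comp_right {r s : ℕ} {f : Finset X → (Fin r → X) → X} (hf : IsAvg k r C f)
    (σ : Fin r → Fin s) : IsAvg k s C (fun Z y => f Z (y ∘ σ)) :=
  ⟨fun Z hZ y hy => (hf.1 Z hZ (y ∘ σ) fun _ => hy _).elim fun i hi => ⟨σ i, hi⟩,
    fun c hc => hf.2 (fun i => c (σ i)) fun _ => hc _⟩

theorem conj_perm [DecidableEq X] {r : ℕ} {f : Finset X → (Fin r → X) → X} (hf : IsAvg k r C f)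
    (hC : SymFam C) (π : Perm X) :
    IsAvg k r C (fun Z x => π (f (Z.image π.symm) fun t => π.symm (x t))) := by
  refine ⟨fun Z hZ x hx => ?_, fun c hc => ?_⟩
  · obtain ⟨i, hi⟩ := hf.1 (Z.image π.symm) (by rwa [card_image_of_injective _ π.symm.injective])
      (fun t => π.symm (x t)) fun _ => mem_image_of_mem _ (hx _)
    exact ⟨i, by simp [hi]⟩
  · have h := hC π.symm _ (hf.2 _ fun i => hC π (c i) (hc i))
    simpa [image_image] using h

theorem exists_isDiagMonarch {n : ℕ} {f : Finset X → (Fin (n + 1) → X) → X}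
    (hf : IsAvg k (n + 1) C f) (hmon : ∀ g, IsAvg k n C g → AvgMonarchy k n g)
    {i j : Fin (n + 1)} (hij : i ≠ j) : ∃ m, IsDiagMonarch k f i j m := by
  let e := finSuccAboveEquiv j
  have he : ∀ p, j.succAbove (e.symm p) = p := fun p => by
    simpa only [e, finSuccAboveEquiv_apply] using congrArg Subtype.val (e.apply_symm_apply p)
  let σ : Fin (n + 1) → Fin n := fun t => e.symm (if h : t = j then ⟨i, hij⟩ else ⟨t, h⟩)
  obtain ⟨t₀, ht₀⟩ := hmon _ (hf.comp_right σ)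
  refine ⟨j.succAbove t₀, fun Z hZ x hx hxij => ?_⟩
  have hxσ : (x ∘ j.succAbove) ∘ σ = x := by
    funext t
    by_cases h : t = j
    · simp [σ, he, h, hxij]
    · simp [σ, he, h]
  calc f Z x = f Z ((x ∘ j.succAbove) ∘ σ) := by rw [hxσ]
    _ = x (j.succAbove t₀) := ht₀ Z hZ _ fun _ => hx _

theorem exists_forall_apply_eq_of_not_injective {n : ℕ} {f : Finset X → (Fin (n + 1) → X) → X}
    (hf : IsAvg k (n + 1) C f) (hmon : ∀ g, IsAvg k n C g → AvgMonarchy k n g)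
    (hn : 4 ≤ n + 1) {Y : Finset X} (hY : Y.card = k) {a : Fin (n + 1) → X}
    (ha : ∀ t, a t ∈ Y) (ha_inj : Injective a) :
    ∃ m₀, ∀ Z : Finset X, Z.card = k → ∀ x : Fin (n + 1) → X, (∀ t, x t ∈ Z) →
      ¬ Injective x → f Z x = x m₀ := by
  have : ∀ i j : Fin (n + 1), ∃ m, i ≠ j → IsDiagMonarch k f i j m := fun i j => by
    by_cases hij : i = j
    · exact ⟨i, (absurd hij ·)⟩
    · exact (hf.exists_isDiagMonarch hmon hij).imp fun _ h _ => h
  choose m hm using this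
  have hcoh : CoherentOnPairs m := fun i j u v σ hij huv hσ₁ hσ₂ =>
    (hm i j hij).apply_eq_apply (hm u v huv) hY ha ha_inj hσ₁ hσ₂
  obtain ⟨m₀, hm₀⟩ := hcoh.exists_apply_eq (β := X) (by simpa using hn)
  refine ⟨m₀, fun Z hZ x hx hx_inj => ?_⟩
  obtain ⟨u, v, hxuv, huv⟩ := not_injective_iff.1 hx_inj
  rw [hm u v huv Z hZ x hx hxuv, hm₀ u v huv x hxuv]

theorem exists_isAvg_apply_eq [DecidableEq X] {r : ℕ} {f : Finset X → (Fin r → X) → X}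
    (hf : IsAvg k r C f) (hC : SymFam C) (hnm : ¬ AvgMonarchy k r f) {m₀ : Fin r}
    (hm₀ : ∀ Z : Finset X, Z.card = k → ∀ x : Fin r → X, (∀ t, x t ∈ Z) →
      ¬ Injective x → f Z x = x m₀)
    {p q : Fin r} (hpq : p ≠ q) {Y : Finset X} (hY : Y.card = k) {a : Fin r → X}
    (ha : ∀ t, a t ∈ Y) (ha_inj : Injective a) :
    ∃ g : Finset X → (Fin r → X) → X, IsAvg k r C g ∧ g Y a = a q ∧
      ∀ Z : Finset X, Z.card = k → ∀ b : Fin r → X, (∀ t, b t ∈ Z) →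
        ¬ Injective b → g Z b = b p := by
  obtain ⟨Y₁, hY₁, x₁, hx₁, hne⟩ : ∃ Y₁ : Finset X, Y₁.card = k ∧
      ∃ x₁ : Fin r → X, (∀ t, x₁ t ∈ Y₁) ∧ f Y₁ x₁ ≠ x₁ m₀ := by
    by_contra! h
    exact hnm ⟨m₀, h⟩
  have hx₁_inj : Injective x₁ := by_contra fun h => hne (hm₀ Y₁ hY₁ x₁ hx₁ h)
  obtain ⟨n₀, hn₀⟩ := hf.1 Y₁ hY₁ x₁ hx₁
  have hmn : m₀ ≠ n₀ := by rintro rfl; exact hne hn₀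
  obtain ⟨σ, hσ⟩ := Perm.exists_extending_pair ![m₀, n₀] ![p, q]
    (by simp [Injective, Fin.forall_fin_two, hmn, hmn.symm])
    (by simp [Injective, Fin.forall_fin_two, hpq, hpq.symm])
  obtain ⟨π, hπ, hπY⟩ := Perm.exists_extending_pair_image_eq (hY₁.trans hY.symm) hx₁_inj
    (ha_inj.comp σ.injective) hx₁ fun _ => ha _
  refine ⟨_, (hf.comp_right σ).conj_perm hC π, ?_, fun Z hZ b hb hb_inj => ?_⟩
  · have hY₁ : Y.image π.symm = Y₁ := by simp [← hπY, image_image]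
    have hx₁ : (fun t => π.symm (a t)) ∘ σ = x₁ := funext fun t => π.symm_apply_eq.2 (hπ t).symm
    show π (f (Y.image π.symm) ((fun t => π.symm (a t)) ∘ σ)) = a q
    rw [hY₁, hx₁, hn₀, hπ]
    simpa using congrArg a (hσ 1)
  · have : ¬ Injective ((fun t => π.symm (b t)) ∘ σ) := fun h =>
      hb_inj ((h.of_comp_right σ.surjective).of_comp (f := π.symm))
    show π (f (Z.image π.symm) ((fun t => π.symm (b t)) ∘ σ)) = b p
    have hZ' : (Z.image π.symm).card = k := by rw [card_image_of_injective _ π.symm.injective, hZ]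
    rw [hm₀ _ hZ' ((fun t => π.symm (b t)) ∘ σ) (fun _ => mem_image_of_mem _ (hb _)) this,
      comp_apply, apply_symm_apply]
    simpa using congrArg b (hσ 0)

end IsAvg

end

theorem stmt19 {X : Type*} [DecidableEq X] (k : ℕ)
    (C : Set (Finset X → X))
    (hsym : SymFam C)
    (r : ℕ) (hr4 : 4 ≤ r)
    (hmon : ∀ s : ℕ, 2 ≤ s → s < r → ∀ g : Finset X → (Fin s → X) → X,
      IsAvg k s C g → AvgMonarchy k s g)
    (hex : ∃ f : Finset X → (Fin r → X) → X, IsAvg k r C f ∧ ¬ AvgMonarchy k r f) :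
    ∀ Y : Finset X, Y.card = k → ∀ a : Fin r → X, (∀ i, a i ∈ Y) →
      Function.Injective a →
      ∃ f : Finset X → (Fin r → X) → X, IsAvg k r C f ∧
        f Y a = a ⟨1, by omega⟩ ∧
        ∀ Z : Finset X, Z.card = k → ∀ b : Fin r → X, (∀ i, b i ∈ Z) →
          ¬ Function.Injective b → f Z b = b ⟨0, by omega⟩ := by
  intro Y hY a ha ha_inj
  obtain ⟨f, hf, hnm⟩ := hex
  obtain ⟨n, rfl⟩ : ∃ n, r = n + 1 := ⟨r - 1, by omega⟩
  obtain ⟨m₀, hm₀⟩ :=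
    hf.exists_forall_apply_eq_of_not_injective (hmon n (by omega) (by omega)) hr4 hY ha ha_inj
  exact hf.exists_isAvg_apply_eq hsym hnm hm₀ (by simp [Fin.ext_iff]) hY ha ha_inj
end
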